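/- arXiv:2107.12015 — 4 statements merged into one kernel-verified Lean document; each statement's English description precedes it below -/
import Mathlib

section
/- Under the setup, there exists C = C(κ,δ) such that ∫_{{V≥E/2}} (u′)² ≤ C E ∫_{{E/2≤V≤2E}} u². -/
open MeasureTheory Filter Set

/-- `V ∈ 𝓗𝒫₁(κ)`: `V` is positive and `C¹` on `(0,∞)` with derivative `V'`, and
`κ⁻¹V(x) ≤ xV′(x) ≤ κV(x)` for all `x > 0`. -/
def HP1 (κ : ℝ) (V V' : ℝ → ℝ) : Prop :=
  (∀ x ∈ Set.Ioi (0 : ℝ), 0 < V x) ∧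
  (∀ x ∈ Set.Ioi (0 : ℝ), HasDerivAt V (V' x) x) ∧
  ContinuousOn V' (Set.Ioi 0) ∧
  (∀ x ∈ Set.Ioi (0 : ℝ), κ⁻¹ * V x ≤ x * V' x ∧ x * V' x ≤ κ * V x)

lemma hp1_log_comp {κ : ℝ} {V V' : ℝ → ℝ} (hκ : 1 ≤ κ) (h : HP1 κ V V')
    {x y : ℝ} (hx : 0 < x) (hxy : x ≤ y) :
    κ⁻¹ * (Real.log y - Real.log x) ≤ Real.log (V y) - Real.log (V x) ∧
      Real.log (V y) - Real.log (V x) ≤ κ * (Real.log y - Real.log x) := by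
  obtain ⟨hVpos, hVd, hV'c, hVin⟩ := h
  have hκ0 : 0 < κ := lt_of_lt_of_le one_pos hκ
  have hcontV : ContinuousOn V (Ioi 0) := fun t ht => (hVd t ht).continuousAt.continuousWithinAt
  have hcontlog : ContinuousOn (fun t => Real.log (V t)) (Ioi 0) :=
    fun t ht => ((Real.continuousAt_log (hVpos t ht).ne').comp
      (hVd t ht).continuousAt).continuousWithinAt
  have hdlog : ∀ t ∈ Ioi (0:ℝ), HasDerivAt (fun s => Real.log (V s)) (V' t / V t) t := by
    intro t ht
    exact (hVd t ht).log (hVpos t ht).ne'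
  -- g
  have hg : MonotoneOn (fun t => Real.log (V t) - κ⁻¹ * Real.log t) (Ioi 0) := by
    apply monotoneOn_of_hasDerivWithinAt_nonneg (convex_Ioi 0)
      (f' := fun t => V' t / V t - κ⁻¹ * t⁻¹)
    · exact hcontlog.sub ((Real.continuousOn_log.mono (by
        intro z hz; exact ne_of_gt hz)).const_smul κ⁻¹)
    · intro t ht
      rw [interior_Ioi] at ht
      exact (((hdlog t ht).sub (((Real.hasDerivAt_log (ne_of_gt ht)).const_mul κ⁻¹)))).hasDerivWithinAt
    · intro t ht
      rw [interior_Ioi] at ht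
      have h1 := (hVin t ht).1
      have hVt := hVpos t ht
      rw [sub_nonneg, mul_comm κ⁻¹ t⁻¹, ← div_eq_inv_mul, div_le_div_iff₀ ht hVt]
      nlinarith [h1]
  have hh : MonotoneOn (fun t => κ * Real.log t - Real.log (V t)) (Ioi 0) := by
    apply monotoneOn_of_hasDerivWithinAt_nonneg (convex_Ioi 0)
      (f' := fun t => κ * t⁻¹ - V' t / V t)
    · exact ((Real.continuousOn_log.mono (by intro z hz; exact ne_of_gt hz)).const_smul κ).sub
        hcontlog
    · intro t ht
      rw [interior_Ioi] at ht
      exact (((Real.hasDerivAt_log (ne_of_gt ht)).const_mul κ).sub (hdlog t ht)).hasDerivWithinAt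
    · intro t ht
      rw [interior_Ioi] at ht
      have h2 := (hVin t ht).2
      have hVt := hVpos t ht
      rw [sub_nonneg, div_le_iff₀ hVt]
      have h3 : (0:ℝ) < t⁻¹ := inv_pos.mpr ht
      have h4 : t * t⁻¹ = 1 := mul_inv_cancel₀ (ne_of_gt ht)
      have h5 := mul_le_mul_of_nonneg_right h2 (le_of_lt h3)
      have h6 : t * V' t * t⁻¹ = V' t := by
        rw [mul_comm t (V' t), mul_assoc, h4, mul_one]
      have h7 : κ * V t * t⁻¹ = κ * t⁻¹ * V t := by ring
      linarith
  have hy : y ∈ Ioi (0:ℝ) := lt_of_lt_of_le hx hxy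
  constructor
  · have := hg hx hy hxy
    simp only at this
    nlinarith [this]
  · have := hh hx hy hxy
    simp only at this
    nlinarith [this]

lemma hp1_strictMonoOn {κ : ℝ} {V V' : ℝ → ℝ} (hκ : 1 ≤ κ) (h : HP1 κ V V') :
    StrictMonoOn V (Ioi 0) := by
  obtain ⟨hVpos, hVd, hV'c, hVin⟩ := h
  have hκ0 : 0 < κ := lt_of_lt_of_le one_pos hκ
  apply strictMonoOn_of_hasDerivWithinAt_pos (convex_Ioi 0) (f' := V')
  · exact fun t ht => (hVd t ht).continuousAt.continuousWithinAt
  · intro t ht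
    rw [interior_Ioi] at ht
    exact (hVd t ht).hasDerivWithinAt
  · intro t ht
    rw [interior_Ioi] at ht
    have h1 := (hVin t ht).1
    have hVt := hVpos t ht
    have h2 : 0 < κ⁻¹ * V t := by positivity
    nlinarith [ht.out]

lemma hp1_exists_level {κ : ℝ} {V V' : ℝ → ℝ} (hκ : 1 ≤ κ) (h : HP1 κ V V')
    (c : ℝ) (hc : 0 < c) : ∃ x, 0 < x ∧ V x = c := by
  have hκ0 : 0 < κ := lt_of_lt_of_le one_pos hκ
  have hVpos := h.1
  have hVd := h.2.1
  have hV1 : 0 < V 1 := hVpos 1 (mem_Ioi.mpr one_pos)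
  have hκκ : κ⁻¹ * κ = 1 := inv_mul_cancel₀ (ne_of_gt hκ0)
  set w : ℝ := Real.exp (κ * (Real.log c - Real.log (V 1))) with hw
  have hwpos : 0 < w := Real.exp_pos _
  have hlogw : Real.log w = κ * (Real.log c - Real.log (V 1)) := Real.log_exp _
  set x₀ : ℝ := if c < V 1 then w else 1 with hx₀def
  set y₀ : ℝ := if V 1 < c then w else 1 with hy₀def
  have hx₀pos : 0 < x₀ := by rw [hx₀def]; split <;> [exact hwpos; exact one_pos]
  have hy₀pos : 0 < y₀ := by rw [hy₀def]; split <;> [exact hwpos; exact one_pos]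
  have hVx₀ : V x₀ ≤ c := by
    rw [hx₀def]; split
    · rename_i hlt
      have hwle : w ≤ 1 := by
        rw [hw]
        apply Real.exp_le_one_iff.mpr
        have : Real.log c < Real.log (V 1) := Real.log_lt_log hc hlt
        nlinarith
      have hcomp := (hp1_log_comp hκ h hwpos hwle).1
      rw [Real.log_one] at hcomp
      have hVw : 0 < V w := hVpos w (mem_Ioi.mpr hwpos)
      have hlog : Real.log (V w) ≤ Real.log c := by
        have e1 : κ⁻¹ * Real.log w = Real.log c - Real.log (V 1) := by
          rw [hlogw, ← mul_assoc, hκκ, one_mul]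
        nlinarith [hcomp, e1]
      calc V w = Real.exp (Real.log (V w)) := (Real.exp_log hVw).symm
        _ ≤ Real.exp (Real.log c) := Real.exp_le_exp.mpr hlog
        _ = c := Real.exp_log hc
    · rename_i hge
      push_neg at hge
      exact hge
  have hVy₀ : c ≤ V y₀ := by
    rw [hy₀def]; split
    · rename_i hlt
      have hwge : 1 ≤ w := by
        rw [hw]
        apply Real.one_le_exp_iff.mpr
        have : Real.log (V 1) < Real.log c := Real.log_lt_log hV1 hlt
        nlinarith
      have hcomp := (hp1_log_comp hκ h one_pos hwge).1
      rw [Real.log_one] at hcomp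
      have hVw : 0 < V w := hVpos w (mem_Ioi.mpr hwpos)
      have hlog : Real.log c ≤ Real.log (V w) := by
        have e1 : κ⁻¹ * Real.log w = Real.log c - Real.log (V 1) := by
          rw [hlogw, ← mul_assoc, hκκ, one_mul]
        nlinarith [hcomp, e1]
      calc c = Real.exp (Real.log c) := (Real.exp_log hc).symm
        _ ≤ Real.exp (Real.log (V w)) := Real.exp_le_exp.mpr hlog
        _ = V w := Real.exp_log hVw
    · rename_i hge
      push_neg at hge
      exact hge
  have hx₀y₀ : x₀ ≤ y₀ := by
    rcases le_or_gt (V x₀) (V y₀) with hle | hlt'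
    · by_contra hgt
      push_neg at hgt
      have := hp1_strictMonoOn hκ h (mem_Ioi.mpr hy₀pos) (mem_Ioi.mpr hx₀pos) hgt
      linarith [hVx₀, hVy₀]
    · linarith [hVx₀, hVy₀]
  have hcont : ContinuousOn V (Icc x₀ y₀) := by
    intro t ht
    exact ((hVd t (mem_Ioi.mpr (lt_of_lt_of_le hx₀pos ht.1))).continuousAt).continuousWithinAt
  obtain ⟨x, hxmem, hVx⟩ := intermediate_value_Icc hx₀y₀ hcont ⟨hVx₀, hVy₀⟩
  exact ⟨x, lt_of_lt_of_le hx₀pos hxmem.1, hVx⟩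

lemma local_bound {E ℓ a : ℝ} {u u' u'' : ℝ → ℝ}
    (hℓ : 0 < ℓ) (hE : 0 ≤ E) (hEl : E * ℓ ^ 2 ≤ 1)
    (hu : ∀ x ∈ Icc a (a + ℓ), HasDerivAt u (u' x) x)
    (hu' : ∀ x ∈ Icc a (a + ℓ), HasDerivAt u' (u'' x) x)
    (hbound : ∀ x ∈ Icc a (a + ℓ), |u'' x| ≤ E * |u x|) :
    |u a * u' a| ≤ 288 / ℓ ^ 2 * ∫ x in a..(a + ℓ), u x ^ 2 := by
  have haI : a ∈ Icc a (a + ℓ) := ⟨le_refl a, by linarith⟩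
  have hcu : ContinuousOn u (Icc a (a + ℓ)) :=
    fun x hx => (hu x hx).continuousAt.continuousWithinAt
  have hcu' : ContinuousOn u' (Icc a (a + ℓ)) :=
    fun x hx => (hu' x hx).continuousAt.continuousWithinAt
  obtain ⟨z, hzI, hzmax⟩ := isCompact_Icc.exists_isMaxOn ⟨a, haI⟩ hcu.abs
  set M := |u z| with hM
  have hM0 : 0 ≤ M := abs_nonneg _
  have hMb : ∀ x ∈ Icc a (a + ℓ), |u x| ≤ M := fun x hx => hzmax hx
  have hM'' : ∀ x ∈ Icc a (a + ℓ), |u'' x| ≤ E * M := fun x hx =>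
    (hbound x hx).trans (mul_le_mul_of_nonneg_left (hMb x hx) hE)
  -- u' is E*M-Lipschitz on I
  have hLip' : ∀ x ∈ Icc a (a + ℓ), ∀ y ∈ Icc a (a + ℓ),
      |u' y - u' x| ≤ E * M * |y - x| := by
    intro x hx y hy
    have := Convex.norm_image_sub_le_of_norm_hasDerivWithin_le
      (f := u') (f' := u'') (s := Icc a (a + ℓ)) (C := E * M)
      (fun t ht => (hu' t ht).hasDerivWithinAt)
      (fun t ht => by rw [Real.norm_eq_abs]; exact hM'' t ht)
      (convex_Icc _ _) hx hy
    simpa [Real.norm_eq_abs] using this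
  -- derivative bound
  have hd : ∀ x ∈ Icc a (a + ℓ), |u' x| ≤ 6 * M / ℓ := by
    intro x hx
    set y : ℝ := if x ≤ a + ℓ / 2 then x + ℓ / 2 else x - ℓ / 2 with hy
    have hyI : y ∈ Icc a (a + ℓ) := by
      rw [hy]; split <;> constructor <;>
        first
          | linarith [hx.1, hx.2]
          | (rename_i hc; push_neg at hc; linarith [hx.1, hx.2])
    have hyx : |y - x| = ℓ / 2 := by
      rw [hy]; split
      · rw [show x + ℓ / 2 - x = ℓ / 2 by ring, abs_of_pos (by linarith)]
      · rw [show x - ℓ / 2 - x = -(ℓ / 2) by ring, abs_neg, abs_of_pos (by linarith)]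
    -- φ t = u t - t * u' x
    have hφd : ∀ t ∈ Icc a (a + ℓ),
        HasDerivWithinAt (fun t => u t - t * u' x) (u' t - u' x) (Icc a (a + ℓ)) t := by
      intro t ht
      have h1 := (hu t ht).sub ((hasDerivAt_id t).mul_const (u' x))
      have h2 : u' t - u' x = u' t - 1 * u' x := by ring
      rw [h2]
      exact h1.hasDerivWithinAt
    have hφb : ∀ t ∈ Icc a (a + ℓ), ‖u' t - u' x‖ ≤ E * M * ℓ := by
      intro t ht
      rw [Real.norm_eq_abs]
      refine (hLip' x hx t ht).trans ?_
      have : |t - x| ≤ ℓ := by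
        rw [abs_le]; constructor <;> linarith [ht.1, ht.2, hx.1, hx.2]
      exact mul_le_mul_of_nonneg_left this (by positivity)
    have h2 := Convex.norm_image_sub_le_of_norm_hasDerivWithin_le
      hφd hφb (convex_Icc _ _) hx hyI
    rw [Real.norm_eq_abs, Real.norm_eq_abs, hyx] at h2
    have h3 : (u y - y * u' x) - (u x - x * u' x) = (u y - u x) - (y - x) * u' x := by ring
    rw [h3] at h2
    have h4 : |(y - x) * u' x| ≤ |u y - u x| + E * M * ℓ * (ℓ / 2) := by
      have := abs_sub_abs_le_abs_sub ((y - x) * u' x) (u y - u x)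
      have htri : |(y - x) * u' x| - |u y - u x| ≤ |(u y - u x) - (y - x) * u' x| := by
        calc |(y - x) * u' x| - |u y - u x| ≤ |(y - x) * u' x - (u y - u x)| :=
              abs_sub_abs_le_abs_sub _ _
          _ = |(u y - u x) - (y - x) * u' x| := by rw [abs_sub_comm]
      linarith
    rw [abs_mul, hyx] at h4
    have h5 : |u y - u x| ≤ 2 * M := by
      have := abs_sub (u y) (u x)
      calc |u y - u x| ≤ |u y| + |u x| := abs_sub _ _
        _ ≤ 2 * M := by linarith [hMb y hyI, hMb x hx]
    have h6 : E * M * ℓ * (ℓ / 2) ≤ M := by nlinarith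
    rw [le_div_iff₀ hℓ]
    nlinarith [h4, h5, h6, abs_nonneg (u' x)]
  -- u is (6M/ℓ)-Lipschitz on I
  have hLipu : ∀ x ∈ Icc a (a + ℓ), ∀ y ∈ Icc a (a + ℓ),
      |u y - u x| ≤ 6 * M / ℓ * |y - x| := by
    intro x hx y hy
    have := Convex.norm_image_sub_le_of_norm_hasDerivWithin_le
      (f := u) (f' := u') (s := Icc a (a + ℓ)) (C := 6 * M / ℓ)
      (fun t ht => (hu t ht).hasDerivWithinAt)
      (fun t ht => by rw [Real.norm_eq_abs]; exact hd t ht)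
      (convex_Icc _ _) hx hy
    simpa [Real.norm_eq_abs] using this
  -- window bound
  set j1 : ℝ := if z ≤ a + ℓ / 2 then z else z - ℓ / 12 with hj1
  have hj1I : Icc j1 (j1 + ℓ / 12) ⊆ Icc a (a + ℓ) := by
    intro t ht
    rw [hj1] at ht; revert ht; split <;>
      (rename_i hc; try push_neg at hc) <;>
      (intro ht; exact ⟨by linarith [ht.1, hzI.1, hzI.2], by linarith [ht.2, hzI.1, hzI.2]⟩)
  have hwin : ∀ t ∈ Icc j1 (j1 + ℓ / 12), M / 2 ≤ |u t| := by
    intro t ht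
    have htz : |t - z| ≤ ℓ / 12 := by
      rw [hj1] at ht; revert ht; split <;>
        (intro ht; rw [abs_le]; constructor <;> linarith [ht.1, ht.2])
    have hLz := hLipu z hzI t (hj1I ht)
    have h7 : |u z| - |u t| ≤ |u t - u z| := by
      calc |u z| - |u t| ≤ |u z - u t| := abs_sub_abs_le_abs_sub _ _
        _ = |u t - u z| := by rw [abs_sub_comm]
    have h8 : 6 * M / ℓ * |t - z| ≤ 6 * M / ℓ * (ℓ / 12) :=
      mul_le_mul_of_nonneg_left htz (by positivity)
    have h9 : 6 * M / ℓ * (ℓ / 12) = M / 2 := by field_simp; ring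
    linarith [hLz, h7, h8]
  -- integral lower bound
  have hint : IntegrableOn (fun x => u x ^ 2) (Icc a (a + ℓ)) :=
    (hcu.pow 2).integrableOn_Icc
  have hIoc : IntegrableOn (fun x => u x ^ 2) (Ioc a (a + ℓ)) :=
    hint.mono_set Ioc_subset_Icc_self
  have hj1win : Ioc j1 (j1 + ℓ / 12) ⊆ Ioc a (a + ℓ) := by
    intro t ht
    have := hj1I (Ioc_subset_Icc_self ht)
    exact ⟨lt_of_lt_of_le (by
      have hj1a : a ≤ j1 := (hj1I ⟨le_refl j1, by linarith⟩).1
      linarith [ht.1] : a < t) (le_refl t) |>.trans_le (le_refl t) |> fun _ => by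
        have hj1a : a ≤ j1 := (hj1I ⟨le_refl j1, by linarith⟩).1
        linarith [ht.1], this.2⟩
  have hlow : M ^ 2 / 4 * (ℓ / 12) ≤ ∫ x in a..(a + ℓ), u x ^ 2 := by
    rw [intervalIntegral.integral_of_le (by linarith : a ≤ a + ℓ)]
    have step1 : ∫ x in Ioc j1 (j1 + ℓ / 12), u x ^ 2 ≤ ∫ x in Ioc a (a + ℓ), u x ^ 2 := by
      apply setIntegral_mono_set hIoc
      · filter_upwards with x using sq_nonneg _
      · exact HasSubset.Subset.eventuallyLE hj1win
    have step2 : M ^ 2 / 4 * (ℓ / 12) ≤ ∫ x in Ioc j1 (j1 + ℓ / 12), u x ^ 2 := by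
      have hconst : ∫ _x in Ioc j1 (j1 + ℓ / 12), (M ^ 2 / 4) =
          M ^ 2 / 4 * (ℓ / 12) := by
        rw [setIntegral_const]
        rw [measureReal_def, Real.volume_Ioc, ENNReal.toReal_ofReal (by linarith : (0:ℝ) ≤ j1 + ℓ / 12 - j1)]
        rw [smul_eq_mul]
        ring
      rw [← hconst]
      apply setIntegral_mono_on
        (integrableOn_const (by rw [Real.volume_Ioc]; exact ENNReal.ofReal_ne_top))
        (hIoc.mono_set hj1win) measurableSet_Ioc
      intro t ht
      have := hwin t (Ioc_subset_Icc_self ht)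
      calc M ^ 2 / 4 = (M / 2) ^ 2 := by ring
        _ ≤ |u t| ^ 2 := by
            apply pow_le_pow_left₀ (by linarith) this
        _ = u t ^ 2 := sq_abs _
    linarith
  -- conclusion
  have hfinal1 : |u a * u' a| ≤ 6 * M ^ 2 / ℓ := by
    rw [abs_mul]
    calc |u a| * |u' a| ≤ M * (6 * M / ℓ) :=
        mul_le_mul (hMb a haI) (hd a haI) (abs_nonneg _) hM0
      _ = 6 * M ^ 2 / ℓ := by ring
  rw [div_mul_eq_mul_div, le_div_iff₀ (by positivity : (0:ℝ) < ℓ ^ 2)]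
  have h10 : 6 * M ^ 2 / ℓ * ℓ ^ 2 = 6 * M ^ 2 * ℓ := by field_simp
  have h11 := mul_le_mul_of_nonneg_right hfinal1 (sq_nonneg ℓ)
  rw [h10] at h11
  linarith [h11, hlow]

lemma sign_lemma {b : ℝ} (hb : 0 < b) {u u' u'' : ℝ → ℝ}
    (hu : ∀ x ∈ Ioi (0:ℝ), HasDerivAt u (u' x) x)
    (hu' : ∀ x ∈ Ioi (0:ℝ), HasDerivAt u' (u'' x) x)
    (hconv : ∀ x ∈ Ici b, 0 ≤ u' x ^ 2 + u x * u'' x)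
    (hL2 : IntegrableOn (fun x => u x ^ 2) (Ioi 0)) :
    ∀ x ∈ Ici b, u x * u' x ≤ 0 := by
  have hmem : Ici b ⊆ Ioi (0:ℝ) := fun x hx => lt_of_lt_of_le hb hx
  have hcont : ContinuousOn (fun x => u x * u' x) (Ici b) := by
    intro x hx
    exact (((hu x (hmem hx)).continuousAt).mul ((hu' x (hmem hx)).continuousAt)).continuousWithinAt
  have mono1 : MonotoneOn (fun x => u x * u' x) (Ici b) := by
    apply monotoneOn_of_hasDerivWithinAt_nonneg (convex_Ici b) hcont
      (f' := fun x => u' x * u' x + u x * u'' x)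
    · intro x hx
      rw [interior_Ici] at hx
      exact ((hu x (hmem (mem_Ici.mpr (le_of_lt (mem_Ioi.mp hx))))).mul (hu' x (hmem (mem_Ici.mpr (le_of_lt (mem_Ioi.mp hx)))))).hasDerivWithinAt
    · intro x hx
      rw [interior_Ici] at hx
      have := hconv x (mem_Ici.mpr (le_of_lt (mem_Ioi.mp hx)))
      nlinarith [this]
  by_contra hcontra
  push_neg at hcontra
  obtain ⟨x1, hx1, hpos⟩ := hcontra
  set c := u x1 * u' x1 with hc
  have hc0 : 0 < c := hpos
  have hx10 : 0 < x1 := hmem hx1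
  -- growth of u^2
  have mono2 : MonotoneOn (fun x => u x * u x - 2 * c * x) (Ici x1) := by
    apply monotoneOn_of_hasDerivWithinAt_nonneg (convex_Ici x1)
      (f' := fun x => (u' x * u x + u x * u' x) - 2 * c)
    · intro x hx
      have hx0 : (0:ℝ) < x := lt_of_lt_of_le hx10 hx
      have hlin : HasDerivAt (fun y : ℝ => 2 * c * y) (2 * c) x := by
        simpa using (hasDerivAt_id x).const_mul (2 * c)
      exact (((hu x hx0).mul (hu x hx0)).sub hlin).continuousAt.continuousWithinAt
    · intro x hx
      rw [interior_Ici] at hx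
      have hx0 : (0:ℝ) < x := lt_of_lt_of_le hx10 (le_of_lt hx)
      have hlin : HasDerivAt (fun y : ℝ => 2 * c * y) (2 * c) x := by
        simpa using (hasDerivAt_id x).const_mul (2 * c)
      exact (((hu x hx0).mul (hu x hx0)).sub hlin).hasDerivWithinAt
    · intro x hx
      rw [interior_Ici] at hx
      have hxb : x ∈ Ici b := mem_Ici.mpr (le_trans (mem_Ici.mp hx1) (le_of_lt (mem_Ioi.mp hx)))
      have := mono1 hx1 hxb (le_of_lt hx)
      simp only at this
      nlinarith [this]
  have growth : ∀ x, x1 ≤ x → 2 * c * (x - x1) ≤ u x * u x := by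
    intro x hx
    have := mono2 (self_mem_Ici) hx hx
    simp only at this
    nlinarith [mul_self_nonneg (u x1)]
  set T := ∫ x in Ioi (0:ℝ), u x ^ 2 with hT
  have hT0 : 0 ≤ T := setIntegral_nonneg measurableSet_Ioi (fun x _ => sq_nonneg _)
  set R := x1 + Real.sqrt ((T + 1) / c) with hR
  have hRx1 : x1 ≤ R := by
    rw [hR]; nlinarith [Real.sqrt_nonneg ((T + 1) / c)]
  have hRsq : c * (R - x1) ^ 2 = T + 1 := by
    rw [hR, add_sub_cancel_left, Real.sq_sqrt (by positivity)]
    field_simp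
  -- integral comparison
  have hIocInt : IntegrableOn (fun x => u x ^ 2) (Ioc x1 R) :=
    hL2.mono_set (fun t ht => lt_trans hx10 ht.1)
  have bound1 : ∫ x in Ioc x1 R, u x ^ 2 ≤ T := by
    rw [hT]
    apply setIntegral_mono_set hL2
    · filter_upwards with x using sq_nonneg _
    · exact HasSubset.Subset.eventuallyLE (fun t ht => lt_trans hx10 ht.1)
  have hlinInt : IntegrableOn (fun x => 2 * c * x - 2 * c * x1) (Ioc x1 R) :=
    ((continuous_const.mul continuous_id).sub continuous_const).integrableOn_Ioc
  have bound2 : c * (R - x1) ^ 2 ≤ ∫ x in Ioc x1 R, u x ^ 2 := by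
    have hcompute : ∫ x in Ioc x1 R, (2 * c * x - 2 * c * x1) = c * (R - x1) ^ 2 := by
      have h3 := intervalIntegral.integral_eq_sub_of_hasDerivAt
        (f := fun y => c * (y - x1) ^ 2) (f' := fun x => 2 * c * x - 2 * c * x1)
        (a := x1) (b := R) ?_ ?_
      · rw [intervalIntegral.integral_of_le hRx1] at h3
        rw [h3]
        ring
      · intro t _ht
        have h := (((hasDerivAt_id t).sub_const x1).pow 2).const_mul c
        have h2 : (2 * c * t - 2 * c * x1) = c * ((2:ℕ) * (id t - x1) ^ (2 - 1) * 1) := by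
          push_cast
          simp only [id_eq]
          ring
        show HasDerivAt (fun y => c * (y - x1) ^ 2) (2 * c * t - 2 * c * x1) t
        rw [h2]
        exact h
      · exact ((continuous_const.mul continuous_id).sub continuous_const).intervalIntegrable _ _
    calc c * (R - x1) ^ 2 = ∫ x in Ioc x1 R, (2 * c * x - 2 * c * x1) := hcompute.symm
      _ ≤ ∫ x in Ioc x1 R, u x ^ 2 := by
          apply setIntegral_mono_on hlinInt hIocInt measurableSet_Ioc
          intro t ht
          have := growth t (le_of_lt ht.1)
          nlinarith [this]
  linarith [bound1, bound2, hRsq]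


set_option maxHeartbeats 1000000 in
/-- Energy estimate.  In the setup (`κ ≥ 1`, `V ∈ 𝓗𝒫₁(κ)`, `√E·|{V≤E}| ≥ δ`,
`u ∈ C² ∩ L²` solving `−u″ + Vu = Eu` on `(0,∞)`), there is `C = C(κ,δ)` with
`∫_{V≥E/2}(u′)² ≤ CE∫_{E/2≤V≤2E}u²`. -/
theorem kinetic_energy_estimate (κ δ : ℝ) (hκ : 1 ≤ κ) (hδ : 0 < δ) :
    ∃ C : ℝ, 0 < C ∧
      ∀ V V' u u' u'' : ℝ → ℝ, ∀ E : ℝ,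
        HP1 κ V V' → 0 < E →
        δ ≤ Real.sqrt E * (volume {x : ℝ | 0 < x ∧ V x ≤ E}).toReal →
        (∀ x ∈ Ioi (0 : ℝ), HasDerivAt u (u' x) x) →
        (∀ x ∈ Ioi (0 : ℝ), HasDerivAt u' (u'' x) x) →
        ContinuousOn u'' (Ioi 0) →
        (∀ x ∈ Ioi (0 : ℝ), -u'' x + V x * u x = E * u x) →
        IntegrableOn (fun x => u x ^ 2) (Ioi 0) →
        (∫⁻ x in {x : ℝ | 0 < x ∧ E / 2 ≤ V x}, ENNReal.ofReal (u' x ^ 2)) ≤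
          ENNReal.ofReal
            (C * E * ∫ t in {x : ℝ | 0 < x ∧ E / 2 ≤ V x ∧ V x ≤ 2 * E}, u t ^ 2) := by
  
  have hκ0 : 0 < κ := lt_of_lt_of_le one_pos hκ
  set c₀ : ℝ := ((4:ℝ) ^ κ⁻¹ - 1) * (2:ℝ) ^ (-κ) * δ with hc₀def
  have h4pow : (1:ℝ) < (4:ℝ) ^ κ⁻¹ := by
    rw [Real.one_lt_rpow_iff_of_pos (by norm_num : (0:ℝ) < 4)]
    exact Or.inl ⟨by norm_num, by positivity⟩
  have h2pow : (0:ℝ) < (2:ℝ) ^ (-κ) := Real.rpow_pos_of_pos (by norm_num) _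
  have hc₀ : 0 < c₀ := by
    rw [hc₀def]
    have : (0:ℝ) < (4:ℝ) ^ κ⁻¹ - 1 := by linarith
    positivity
  refine ⟨1 + 288 * (1 + c₀⁻¹ ^ 2), by positivity, ?_⟩
  intro V V' u u' u'' E hHP hE hδE hu hu' hu''c heq hL2
  have hVpos := hHP.1
  have hVd := hHP.2.1
  have hmono := hp1_strictMonoOn hκ hHP
  have hmonoOn : MonotoneOn V (Ioi 0) := hmono.monotoneOn
  have hsqE : (0:ℝ) < Real.sqrt E := Real.sqrt_pos.mpr hE
  -- the levels
  obtain ⟨a, ha0, hVa⟩ := hp1_exists_level hκ hHP (E / 2) (by positivity)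
  obtain ⟨m, hm0, hVm⟩ := hp1_exists_level hκ hHP E hE
  obtain ⟨bb, hb0, hVb⟩ := hp1_exists_level hκ hHP (2 * E) (by positivity)
  have ham : a < m := by
    rw [← hmono.lt_iff_lt (mem_Ioi.mpr ha0) (mem_Ioi.mpr hm0), hVa, hVm]; linarith
  have hmb : m < bb := by
    rw [← hmono.lt_iff_lt (mem_Ioi.mpr hm0) (mem_Ioi.mpr hb0), hVm, hVb]; linarith
  have hab : a < bb := ham.trans hmb
  -- equation rewrite
  have hw : ∀ x ∈ Ioi (0:ℝ), u'' x = (V x - E) * u x := by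
    intro x hx
    have := heq x hx
    nlinarith [this]
  -- measure of sublevel set
  have hsetm : {x : ℝ | 0 < x ∧ V x ≤ E} = Ioc 0 m := by
    ext x
    simp only [mem_setOf_eq, mem_Ioc]
    constructor
    · rintro ⟨hx0, hxE⟩
      refine ⟨hx0, ?_⟩
      by_contra hgt
      push_neg at hgt
      have := hmono (mem_Ioi.mpr hm0) (mem_Ioi.mpr hx0) hgt
      rw [hVm] at this
      linarith
    · rintro ⟨hx0, hxm⟩
      refine ⟨hx0, ?_⟩
      have := hmonoOn (mem_Ioi.mpr hx0) (mem_Ioi.mpr hm0) hxm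
      rw [hVm] at this
      exact this
  have hδm : δ ≤ Real.sqrt E * m := by
    rw [hsetm, Real.volume_Ioc, ENNReal.toReal_ofReal (by linarith)] at hδE
    simpa using hδE
  -- geometric bounds
  have hma : m ≤ (2:ℝ) ^ κ * a := by
    have hcomp := (hp1_log_comp hκ hHP ha0 (le_of_lt ham)).1
    rw [hVm, hVa] at hcomp
    have hlogdiff : Real.log E - Real.log (E / 2) = Real.log 2 := by
      rw [Real.log_div (ne_of_gt hE) (by norm_num)]
      ring
    rw [hlogdiff] at hcomp
    have hstep : Real.log m - Real.log a ≤ κ * Real.log 2 := by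
      have := mul_le_mul_of_nonneg_left hcomp (le_of_lt hκ0)
      rw [← mul_assoc, mul_inv_cancel₀ (ne_of_gt hκ0), one_mul] at this
      exact this
    have h2κ : (2:ℝ) ^ κ = Real.exp (κ * Real.log 2) := by
      rw [Real.rpow_def_of_pos (by norm_num : (0:ℝ) < 2), mul_comm]
    calc m = Real.exp (Real.log m) := (Real.exp_log hm0).symm
      _ ≤ Real.exp (Real.log a + κ * Real.log 2) := Real.exp_le_exp.mpr (by linarith)
      _ = (2:ℝ) ^ κ * a := by rw [Real.exp_add, h2κ, Real.exp_log ha0]; ring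
  have hba : a * (4:ℝ) ^ κ⁻¹ ≤ bb := by
    have hcomp := (hp1_log_comp hκ hHP ha0 (le_of_lt hab)).2
    rw [hVb, hVa] at hcomp
    have hlogdiff : Real.log (2 * E) - Real.log (E / 2) = Real.log 4 := by
      rw [Real.log_mul (by norm_num) (ne_of_gt hE), Real.log_div (ne_of_gt hE) (by norm_num),
        show (4:ℝ) = 2 ^ 2 by norm_num, Real.log_pow]
      push_cast
      ring
    rw [hlogdiff] at hcomp
    have hstep : κ⁻¹ * Real.log 4 ≤ Real.log bb - Real.log a := by
      have := mul_le_mul_of_nonneg_left hcomp (by positivity : (0:ℝ) ≤ κ⁻¹)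
      rw [← mul_assoc, inv_mul_cancel₀ (ne_of_gt hκ0), one_mul] at this
      exact this
    have h4κ : (4:ℝ) ^ κ⁻¹ = Real.exp (κ⁻¹ * Real.log 4) := by
      rw [Real.rpow_def_of_pos (by norm_num : (0:ℝ) < 4), mul_comm]
    calc a * (4:ℝ) ^ κ⁻¹ = Real.exp (Real.log a + κ⁻¹ * Real.log 4) := by
          rw [Real.exp_add, h4κ, Real.exp_log ha0]
      _ ≤ Real.exp (Real.log bb) := Real.exp_le_exp.mpr (by linarith)
      _ = bb := Real.exp_log hb0
  have hLlower : c₀ / Real.sqrt E ≤ bb - a := by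
    rw [div_le_iff₀ hsqE]
    have h1 : m * (2:ℝ) ^ (-κ) ≤ a := by
      rw [Real.rpow_neg (by norm_num : (0:ℝ) ≤ 2)]
      rw [mul_comm, ← div_eq_inv_mul, div_le_iff₀ (Real.rpow_pos_of_pos (by norm_num) κ)]
      linarith [hma]
    have h2 : δ / Real.sqrt E ≤ m := by
      rw [div_le_iff₀ hsqE]; linarith [hδm]
    have h3 : ((4:ℝ) ^ κ⁻¹ - 1) * a ≤ bb - a := by nlinarith [hba]
    have h4 : δ / Real.sqrt E * (2:ℝ) ^ (-κ) ≤ a := by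
      calc δ / Real.sqrt E * (2:ℝ) ^ (-κ) ≤ m * (2:ℝ) ^ (-κ) :=
            mul_le_mul_of_nonneg_right h2 (le_of_lt h2pow)
        _ ≤ a := h1
    have h5 : ((4:ℝ) ^ κ⁻¹ - 1) * (δ / Real.sqrt E * (2:ℝ) ^ (-κ)) ≤ bb - a := by
      refine le_trans ?_ h3
      apply mul_le_mul_of_nonneg_left h4 (by linarith)
    calc c₀ = ((4:ℝ) ^ κ⁻¹ - 1) * (δ * (2:ℝ) ^ (-κ)) := by rw [hc₀def]; ring
      _ ≤ (bb - a) * Real.sqrt E := by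
          have := mul_le_mul_of_nonneg_right h5 (le_of_lt hsqE)
          calc ((4:ℝ) ^ κ⁻¹ - 1) * (δ * (2:ℝ) ^ (-κ))
              = ((4:ℝ) ^ κ⁻¹ - 1) * (δ / Real.sqrt E * (2:ℝ) ^ (-κ)) * Real.sqrt E := by
                field_simp
            _ ≤ (bb - a) * Real.sqrt E := this
  -- length scale
  set ℓ : ℝ := min (bb - a) (Real.sqrt E)⁻¹ with hℓdef
  have hℓ0 : 0 < ℓ := lt_min (by linarith) (by positivity)
  have hℓL : ℓ ≤ bb - a := min_le_left _ _
  have hEsq : Real.sqrt E * Real.sqrt E = E := Real.mul_self_sqrt (le_of_lt hE)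
  have hEℓ : E * ℓ ^ 2 ≤ 1 := by
    have h1 : ℓ ≤ (Real.sqrt E)⁻¹ := min_le_right _ _
    have h2 : ℓ * Real.sqrt E ≤ 1 := by
      rw [← mul_inv_cancel₀ (ne_of_gt hsqE)]
      exact mul_le_mul_of_nonneg_right h1 (le_of_lt hsqE) |>.trans_eq (by ring)
    have h3 : (ℓ * Real.sqrt E) * (ℓ * Real.sqrt E) ≤ 1 := by
      nlinarith [mul_pos hℓ0 hsqE]
    nlinarith [h3, hEsq]
  have hℓinv : 288 / ℓ ^ 2 ≤ 288 * (1 + c₀⁻¹ ^ 2) * E := by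
    rw [div_le_iff₀ (by positivity : (0:ℝ) < ℓ ^ 2)]
    have key : 1 ≤ (1 + c₀⁻¹ ^ 2) * E * ℓ ^ 2 := by
      rcases le_total ((Real.sqrt E)⁻¹) (bb - a) with hcase | hcase
      · have hℓeq : ℓ = (Real.sqrt E)⁻¹ := min_eq_right hcase
        have heq1 : E * ℓ ^ 2 = 1 := by
          rw [hℓeq, inv_pow, Real.sq_sqrt (le_of_lt hE), mul_inv_cancel₀ (ne_of_gt hE)]
        nlinarith [sq_nonneg c₀⁻¹, hE, heq1]
      · have hℓeq : ℓ = bb - a := min_eq_left hcase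
        have hℓlow : c₀ / Real.sqrt E ≤ ℓ := by rw [hℓeq]; exact hLlower
        have hc₀inv : c₀⁻¹ * c₀ = 1 := inv_mul_cancel₀ (ne_of_gt hc₀)
        have h6 : c₀ ≤ ℓ * Real.sqrt E := by
          rw [div_le_iff₀ hsqE] at hℓlow
          exact hℓlow
        have h7 : c₀ ^ 2 ≤ E * ℓ ^ 2 := by
          have h7a := mul_le_mul h6 h6 (le_of_lt hc₀) (by positivity)
          nlinarith [h7a, hEsq]
        have h8 : c₀⁻¹ ^ 2 * c₀ ^ 2 = 1 := by
          rw [← mul_pow, hc₀inv, one_pow]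
        have h9 := mul_le_mul_of_nonneg_left h7 (by positivity : (0:ℝ) ≤ c₀⁻¹ ^ 2)
        have h10 : 0 ≤ E * ℓ ^ 2 := by positivity
        linarith [h8, h9, h10]
    linarith [key]
  -- continuity and integrability helpers
  have hIccSub : ∀ {R : ℝ}, Icc a R ⊆ Ioi (0:ℝ) := fun {R} t ht => lt_of_lt_of_le ha0 ht.1
  have hcu : ContinuousOn u (Ioi 0) := fun x hx => (hu x hx).continuousAt.continuousWithinAt
  have hcu' : ContinuousOn u' (Ioi 0) := fun x hx => (hu' x hx).continuousAt.continuousWithinAt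
  have hcu'2 : ContinuousOn (fun x => u' x ^ 2) (Ioi 0) := hcu'.pow 2
  have hcu2 : ContinuousOn (fun x => u x ^ 2) (Ioi 0) := hcu.pow 2
  have hcuu'' : ContinuousOn (fun x => u x * u'' x) (Ioi 0) := hcu.mul hu''c
  have hii : ∀ {f : ℝ → ℝ}, ContinuousOn f (Ioi 0) → ∀ {p q : ℝ}, 0 < p → 0 < q →
      IntervalIntegrable f volume p q := by
    intro f hf p q hp hq
    apply (hf.mono ?_).intervalIntegrable
    intro t ht
    exact lt_of_lt_of_le (lt_min hp hq) ht.1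
  have hVrange : ∀ x ∈ Icc a bb, E / 2 ≤ V x ∧ V x ≤ 2 * E := by
    intro x hx
    have hx0 : (0:ℝ) < x := hIccSub hx
    constructor
    · rw [← hVa]
      exact hmonoOn (mem_Ioi.mpr ha0) (mem_Ioi.mpr hx0) hx.1
    · rw [← hVb]
      exact hmonoOn (mem_Ioi.mpr hx0) (mem_Ioi.mpr hb0) hx.2
  -- sign of u u' beyond bb
  have hconv : ∀ x ∈ Ici bb, 0 ≤ u' x ^ 2 + u x * u'' x := by
    intro x hx
    have hx0 : (0:ℝ) < x := lt_of_lt_of_le hb0 hx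
    have hVx : 2 * E ≤ V x := by
      rw [← hVb]
      exact hmonoOn (mem_Ioi.mpr hb0) (mem_Ioi.mpr hx0) hx
    rw [hw x (mem_Ioi.mpr hx0)]
    nlinarith [sq_nonneg (u x), sq_nonneg (u' x),
      mul_nonneg (by linarith : (0:ℝ) ≤ V x - E) (sq_nonneg (u x))]
  have hsign := sign_lemma hb0 hu hu' hconv hL2
  -- integration by parts bound
  set K : ℝ := -(u a * u' a) + E * ∫ x in a..bb, u x ^ 2 with hKdef
  have hIBP : ∀ R, bb ≤ R → ∫ x in a..R, u' x ^ 2 ≤ K := by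
    intro R hR
    have haR : a ≤ R := le_trans (le_of_lt hab) hR
    have hR0 : (0:ℝ) < R := lt_of_lt_of_le hb0 hR
    have hFTC : ∫ x in a..R, (u' x ^ 2 + u x * u'' x) = u R * u' R - u a * u' a := by
      apply intervalIntegral.integral_eq_sub_of_hasDerivAt
      · intro t ht
        rw [uIcc_of_le haR] at ht
        have ht0 : t ∈ Ioi (0:ℝ) := hIccSub ht
        have h := (hu t ht0).mul (hu' t ht0)
        show HasDerivAt _ (u' t ^ 2 + u t * u'' t) t
        rw [pow_two]
        exact h
      · exact hii (hcu'2.add hcuu'') ha0 hR0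
    have split1 : ∫ x in a..R, (u' x ^ 2 + u x * u'' x) =
        (∫ x in a..R, u' x ^ 2) + ∫ x in a..R, u x * u'' x :=
      intervalIntegral.integral_add (hii hcu'2 ha0 hR0) (hii hcuu'' ha0 hR0)
    have split2 : (∫ x in a..bb, u x * u'' x) + ∫ x in bb..R, u x * u'' x =
        ∫ x in a..R, u x * u'' x :=
      intervalIntegral.integral_add_adjacent_intervals (hii hcuu'' ha0 hb0)
        (hii hcuu'' hb0 hR0)
    have h4 : 0 ≤ ∫ x in bb..R, u x * u'' x := by
      apply intervalIntegral.integral_nonneg hR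
      intro t ht
      have ht0 : t ∈ Ioi (0:ℝ) := lt_of_lt_of_le hb0 ht.1
      have hVt : 2 * E ≤ V t := by
        rw [← hVb]
        exact hmonoOn (mem_Ioi.mpr hb0) ht0 ht.1
      rw [hw t ht0]
      nlinarith [mul_nonneg (by linarith : (0:ℝ) ≤ V t - E) (sq_nonneg (u t))]
    have h5 : -(E * ∫ x in a..bb, u x ^ 2) ≤ ∫ x in a..bb, u x * u'' x := by
      have h5a : 0 ≤ ∫ x in a..bb, (u x * u'' x + E * u x ^ 2) := by
        apply intervalIntegral.integral_nonneg (le_of_lt hab)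
        intro t ht
        have ht0 : t ∈ Ioi (0:ℝ) := hIccSub ht
        rw [hw t ht0]
        nlinarith [mul_nonneg (le_of_lt (hVpos t ht0)) (sq_nonneg (u t))]
      have h5b : ∫ x in a..bb, (u x * u'' x + E * u x ^ 2) =
          (∫ x in a..bb, u x * u'' x) + E * ∫ x in a..bb, u x ^ 2 := by
        rw [intervalIntegral.integral_add (hii hcuu'' ha0 hb0)
          (hii (f := fun x => E * u x ^ 2) (continuousOn_const.mul hcu2) ha0 hb0), intervalIntegral.integral_const_mul]
      linarith [h5a, h5b]
    have h6 : u R * u' R ≤ 0 := hsign R hR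
    rw [hKdef]
    linarith [hFTC, split1, split2, h4, h5, h6]
  -- integrability on Ioi a
  have hIocInt : ∀ i : ℝ, IntegrableOn (fun x => u' x ^ 2) (Ioc a i) := by
    intro i
    rcases le_or_gt a i with hi | hi
    · exact ((hcu'2.mono hIccSub).integrableOn_Icc).mono_set Ioc_subset_Icc_self
    · rw [Ioc_eq_empty (not_lt.mpr (le_of_lt hi))]
      exact integrableOn_empty
  have hIntIoi : IntegrableOn (fun x => u' x ^ 2) (Ioi a) := by
    apply integrableOn_Ioi_of_intervalIntegral_norm_bounded K a hIocInt
      (tendsto_id (x := atTop)) ?_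
    filter_upwards [eventually_ge_atTop bb] with i hi
    have hnorm : ∫ x in a..i, ‖u' x ^ 2‖ = ∫ x in a..i, u' x ^ 2 := by
      apply intervalIntegral.integral_congr
      intro t _ht
      simp only [Real.norm_eq_abs]
      exact abs_of_nonneg (sq_nonneg _)
    rw [hnorm]
    exact hIBP i hi
  have hIoiBound : ∫ x in Ioi a, u' x ^ 2 ≤ K := by
    have hlim := intervalIntegral_tendsto_integral_Ioi a hIntIoi (tendsto_id (x := atTop))
    apply le_of_tendsto hlim
    filter_upwards [eventually_ge_atTop bb] with i hi
    exact hIBP i hi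
  -- the sets
  have hset1 : {x : ℝ | 0 < x ∧ E / 2 ≤ V x} = Ici a := by
    ext x
    simp only [mem_setOf_eq, mem_Ici]
    constructor
    · rintro ⟨hx0, hVx⟩
      by_contra hlt
      push_neg at hlt
      have := hmono (mem_Ioi.mpr hx0) (mem_Ioi.mpr ha0) hlt
      rw [hVa] at this
      linarith
    · intro hax
      have hx0 : (0:ℝ) < x := lt_of_lt_of_le ha0 hax
      refine ⟨hx0, ?_⟩
      rw [← hVa]
      exact hmonoOn (mem_Ioi.mpr ha0) (mem_Ioi.mpr hx0) hax
  have hset2 : {x : ℝ | 0 < x ∧ E / 2 ≤ V x ∧ V x ≤ 2 * E} = Icc a bb := by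
    ext x
    simp only [mem_setOf_eq, mem_Icc]
    constructor
    · rintro ⟨hx0, hVx1, hVx2⟩
      constructor
      · by_contra hlt
        push_neg at hlt
        have := hmono (mem_Ioi.mpr hx0) (mem_Ioi.mpr ha0) hlt
        rw [hVa] at this
        linarith
      · by_contra hlt
        push_neg at hlt
        have := hmono (mem_Ioi.mpr hb0) (mem_Ioi.mpr hx0) hlt
        rw [hVb] at this
        linarith
    · rintro ⟨hax, hxb⟩
      have hx0 : (0:ℝ) < x := lt_of_lt_of_le ha0 hax
      have := hVrange x ⟨hax, hxb⟩
      exact ⟨hx0, this.1, this.2⟩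
  have hIcc2 : ∫ t in Icc a bb, u t ^ 2 = ∫ t in a..bb, u t ^ 2 := by
    rw [integral_Icc_eq_integral_Ioc, intervalIntegral.integral_of_le (le_of_lt hab)]
  -- the local bound at a
  have haℓbb : a + ℓ ≤ bb := by linarith [hℓL]
  have hlocal : |u a * u' a| ≤ 288 / ℓ ^ 2 * ∫ x in a..(a + ℓ), u x ^ 2 := by
    apply local_bound hℓ0 (le_of_lt hE) hEℓ
    · intro x hx
      exact hu x (hIccSub ⟨hx.1, hx.2⟩)
    · intro x hx
      exact hu' x (hIccSub ⟨hx.1, hx.2⟩)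
    · intro x hx
      have hxbb : x ∈ Icc a bb := ⟨hx.1, le_trans hx.2 haℓbb⟩
      have hx0 : x ∈ Ioi (0:ℝ) := hIccSub hxbb
      have hVr := hVrange x hxbb
      rw [hw x hx0, abs_mul]
      apply mul_le_mul_of_nonneg_right ?_ (abs_nonneg _)
      rw [abs_le]
      constructor <;> [linarith [hVr.1, hE]; linarith [hVr.2]]
  have hmon_int : ∫ x in a..(a + ℓ), u x ^ 2 ≤ ∫ x in a..bb, u x ^ 2 := by
    rw [intervalIntegral.integral_of_le (by linarith : a ≤ a + ℓ),
      intervalIntegral.integral_of_le (le_of_lt hab)]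
    apply setIntegral_mono_set
      (((hcu2.mono hIccSub).integrableOn_Icc).mono_set Ioc_subset_Icc_self)
    · filter_upwards with x using sq_nonneg _
    · exact HasSubset.Subset.eventuallyLE (Ioc_subset_Ioc_right haℓbb)
  have hint0 : 0 ≤ ∫ x in a..(a + ℓ), u x ^ 2 :=
    intervalIntegral.integral_nonneg (by linarith) (fun t _ => sq_nonneg _)
  have hint1 : 0 ≤ ∫ x in a..bb, u x ^ 2 :=
    intervalIntegral.integral_nonneg (le_of_lt hab) (fun t _ => sq_nonneg _)
  have hK : K ≤ (1 + 288 * (1 + c₀⁻¹ ^ 2)) * E * ∫ x in a..bb, u x ^ 2 := by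
    have s1 : -(u a * u' a) ≤ |u a * u' a| := neg_le_abs _
    have s2 : 288 / ℓ ^ 2 * ∫ x in a..(a + ℓ), u x ^ 2 ≤
        288 * (1 + c₀⁻¹ ^ 2) * E * ∫ x in a..(a + ℓ), u x ^ 2 :=
      mul_le_mul_of_nonneg_right hℓinv hint0
    have s3 : 288 * (1 + c₀⁻¹ ^ 2) * E * (∫ x in a..(a + ℓ), u x ^ 2) ≤
        288 * (1 + c₀⁻¹ ^ 2) * E * ∫ x in a..bb, u x ^ 2 := by
      apply mul_le_mul_of_nonneg_left hmon_int
      positivity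
    rw [hKdef]
    nlinarith [s1, s2, s3, hlocal, hint1]
  -- conclusion
  rw [hset1, hset2, hIcc2]
  calc ∫⁻ x in Ici a, ENNReal.ofReal (u' x ^ 2)
      = ∫⁻ x in Ioi a, ENNReal.ofReal (u' x ^ 2) :=
        (setLIntegral_congr (Ioi_ae_eq_Ici (a := a))).symm
    _ = ENNReal.ofReal (∫ x in Ioi a, u' x ^ 2) :=
        (ofReal_integral_eq_lintegral_ofReal hIntIoi
          (ae_of_all _ (fun x => sq_nonneg _))).symm
    _ ≤ ENNReal.ofReal ((1 + 288 * (1 + c₀⁻¹ ^ 2)) * E * ∫ t in a..bb, u t ^ 2) :=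
        ENNReal.ofReal_le_ofReal (le_trans hIoiBound hK)
end

section
/- Let V : ℝ → [0,∞) be continuous. Suppose E > 0 is an eigenvalue of the Schrödinger operator −d²/dx² + V on ℝ, in the sense that there exists a nonzero ψ ∈ C²(ℝ;ℝ) with ψ ∈ L²(ℝ), V·ψ ∈ L²(ℝ), and −ψ″ + Vψ = Eψ on ℝ. Then for every ε ∈ (0,1): √E · |{x ∈ ℝ : V(x) < ε^{−2}E}| ≥ (4/27)(1−ε)³ π. (In particular this holds for the lowest eigenvalue E₁(V).) -/
open MeasureTheory Set Filter Topology

lemma exists_lt_of_integrable_sq (ψ : ℝ → ℝ)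
    (hL2 : Integrable (fun x => ψ x ^ 2)) (s : Set ℝ) (hsm : MeasurableSet s)
    (hvol : volume s = ⊤) (c : ℝ) (hc : 0 < c) : ∃ b ∈ s, ψ b < c := by
  by_contra h
  push_neg at h
  have hint : IntegrableOn (fun x => ψ x ^ 2) s := hL2.integrableOn
  have hconst : Integrable (fun _ : ℝ => c ^ 2) (volume.restrict s) := by
    refine Integrable.mono hint aestronglyMeasurable_const ?_
    filter_upwards [ae_restrict_mem hsm] with x hx
    have h2 := h x hx
    simp only [Real.norm_eq_abs]
    rw [abs_of_nonneg (by positivity), abs_of_nonneg (by nlinarith)]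
    nlinarith
  rw [integrable_const_iff] at hconst
  rcases hconst with h0 | hfin
  · exact absurd h0 (by positivity)
  · have hfin' := hfin.measure_univ_lt_top
    rw [Measure.restrict_apply_univ, hvol] at hfin'
    exact absurd hfin' (by simp)

lemma alg_step (ε E s L α : ℝ) (hε0 : 0 < ε) (hε1 : ε < 1) (hE : 0 < E) (hs0 : 0 ≤ s)
    (hα : α = ε⁻¹ ^ 2 * E) (hαE : E < α)
    (hA : 1 ≤ 2 * (E * s * L)) (hB : (α - E) * L ≤ (α + E) * s) :
    (1 - ε) / 4 ≤ E * s ^ 2 := by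
  have h1 : (α - E) / 2 ≤ E * s * L * (α - E) := by
    nlinarith [mul_nonneg (sub_nonneg.mpr hαE.le) (by linarith : (0:ℝ) ≤ 2 * (E * s * L) - 1)]
  have h2 : E * s * L * (α - E) ≤ E * s ^ 2 * (α + E) := by
    nlinarith [mul_le_mul_of_nonneg_left hB (mul_nonneg hE.le hs0)]
  have h3 : (α - E) / 2 ≤ E * s ^ 2 * (α + E) := le_trans h1 h2
  have hαε : ε ^ 2 * α = E := by rw [hα]; field_simp
  have hP : 0 ≤ E * s ^ 2 := by positivity
  have h3' := mul_le_mul_of_nonneg_left h3 (sq_nonneg ε)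
  have h9 : (E * s ^ 2) * (ε ^ 2 * α) = (E * s ^ 2) * E := by rw [hαε]
  have hsq : (0:ℝ) ≤ 1 - ε ^ 2 := by nlinarith
  have h8 : E * (1 - ε ^ 2) / 2 ≤ 2 * ((E * s ^ 2) * E) := by
    nlinarith [h3', h9, hαε, hP, hE.le, mul_nonneg (mul_nonneg hP hE.le) hsq]
  nlinarith [h8, hE, hP, mul_nonneg (mul_nonneg hE.le hε0.le) (by linarith : (0:ℝ) ≤ 1 - ε)]

lemma sqrt_final (ε q : ℝ) (hε0 : 0 < ε) (hε1 : ε < 1)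
    (hq : Real.sqrt (1 - ε) / 2 ≤ q) :
    4 / 27 * (1 - ε) ^ 3 * Real.pi ≤ q := by
  have h0 : (0:ℝ) ≤ 1 - ε := by linarith
  have hu : (1 - ε) ≤ Real.sqrt (1 - ε) := by
    nlinarith [Real.sq_sqrt h0, Real.sqrt_nonneg (1 - ε)]
  have huu : (1 - ε) ^ 3 ≤ (1 - ε) := by
    nlinarith [mul_nonneg (mul_nonneg h0 hε0.le) (show (0:ℝ) ≤ 2 - ε by linarith)]
  nlinarith [le_trans huu hu, Real.pi_lt_d2, Real.pi_pos, pow_nonneg h0 3, hq]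

set_option maxHeartbeats 1000000 in
lemma key_bound (V : ℝ → ℝ) (hVc : Continuous V) (hV0 : ∀ x, 0 ≤ V x)
    (E : ℝ) (hE : 0 < E) (ψ ψ' ψ'' : ℝ → ℝ)
    (hd : ∀ x : ℝ, HasDerivAt ψ (ψ' x) x)
    (hd' : ∀ x : ℝ, HasDerivAt ψ' (ψ'' x) x)
    (hc : Continuous ψ'')
    (hL2 : Integrable (fun x => ψ x ^ 2))
    (heq : ∀ x : ℝ, -ψ'' x + V x * ψ x = E * ψ x)
    (a : ℝ) (ha : 0 < ψ a) :
    ∀ ε : ℝ, 0 < ε → ε < 1 →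
      ENNReal.ofReal (4 / 27 * (1 - ε) ^ 3 * Real.pi) ≤
        ENNReal.ofReal (Real.sqrt E) * volume {x : ℝ | V x < ε⁻¹ ^ 2 * E} := by
  intro ε hε0 hε1
  have hψcont : Continuous ψ := continuous_iff_continuousAt.mpr fun x => (hd x).continuousAt
  have hψ'cont : Continuous ψ' := continuous_iff_continuousAt.mpr fun x => (hd' x).continuousAt
  have hψ'' : ∀ x, ψ'' x = V x * ψ x - E * ψ x := fun x => by linarith [heq x]
  set α : ℝ := ε⁻¹ ^ 2 * E with hαdef
  have hinv1 : (1:ℝ) < ε⁻¹ := (one_lt_inv₀ hε0).mpr hε1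
  have hαE : E < α := by
    have h2 : (1:ℝ) < ε⁻¹ ^ 2 := by nlinarith
    nlinarith
  set S : Set ℝ := {x : ℝ | V x < α} with hSdef
  have hSm : MeasurableSet S := (isOpen_lt hVc continuous_const).measurableSet
  set m : ℝ := ψ a with hmdef
  -- find b' ≤ a and b ≥ a where ψ is small
  obtain ⟨b, hbmem, hb⟩ := exists_lt_of_integrable_sq ψ hL2 (Ici a)
    measurableSet_Ici (by simp [Real.volume_Ici]) (m / 2) (by positivity)
  obtain ⟨b', hb'mem, hb'⟩ := exists_lt_of_integrable_sq ψ hL2 (Iic a)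
    measurableSet_Iic (by simp [Real.volume_Iic]) (m / 2) (by positivity)
  have hb'a : b' < a := lt_of_le_of_ne hb'mem (by intro h; rw [h] at hb'; linarith)
  have hab : a < b := lt_of_le_of_ne hbmem (by intro h; rw [← h, ← hmdef] at hb; linarith)
  -- maximum point x₂
  obtain ⟨x₂, hx₂mem, hmax⟩ := isCompact_Icc.exists_isMaxOn (s := Icc b' b)
    ⟨a, le_of_lt hb'a, le_of_lt hab⟩ hψcont.continuousOn
  set M : ℝ := ψ x₂ with hMdef
  have hmM : m ≤ M := hmax ⟨le_of_lt hb'a, le_of_lt hab⟩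
  have hM : 0 < M := lt_of_lt_of_le ha hmM
  have hx₂int : x₂ ∈ Ioo b' b := by
    rcases hx₂mem with ⟨h1, h2⟩
    constructor
    · rcases lt_or_eq_of_le h1 with h | h
      · exact h
      · exfalso; rw [h, ← hMdef] at hb'; linarith
    · rcases lt_or_eq_of_le h2 with h | h
      · exact h
      · exfalso; rw [← h, ← hMdef] at hb; linarith
  have hψ'x₂ : ψ' x₂ = 0 :=
    (hmax.isLocalMax (Icc_mem_nhds hx₂int.1 hx₂int.2)).hasDerivAt_eq_zero (hd x₂)
  -- first point x₁ after x₂ where ψ = M/2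
  set T : Set ℝ := Icc x₂ b ∩ {x | ψ x ≤ M / 2} with hTdef
  have hTne : T.Nonempty := ⟨b, ⟨le_of_lt hx₂int.2, le_refl b⟩, by
    simp only [mem_setOf_eq]; linarith⟩
  have hTclosed : IsClosed T := isClosed_Icc.inter (isClosed_le hψcont continuous_const)
  have hTbdd : BddBelow T := (bddBelow_Icc : BddBelow (Icc x₂ b)).mono inter_subset_left
  set x₁ : ℝ := sInf T with hx₁def
  have hx₁T : x₁ ∈ T := hTclosed.csInf_mem hTne hTbdd
  have hx₁b : x₁ ≤ b := hx₁T.1.2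
  have hψx₁le : ψ x₁ ≤ M / 2 := hx₁T.2
  have hx₂x₁ : x₂ < x₁ := lt_of_le_of_ne hx₁T.1.1 (by
    intro h; rw [← h] at hψx₁le; rw [← hMdef] at hψx₁le; linarith)
  have hIco : ∀ t ∈ Ico x₂ x₁, M / 2 < ψ t := by
    intro t ht
    by_contra hcon
    push_neg at hcon
    have : t ∈ T := ⟨⟨ht.1, le_trans (le_of_lt ht.2) hx₁b⟩, hcon⟩
    exact absurd (csInf_le hTbdd this) (not_le.mpr ht.2)
  have hψx₁ : ψ x₁ = M / 2 := by
    refine le_antisymm hψx₁le ?_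
    have htend : Tendsto ψ (𝓝[<] x₁) (𝓝 (ψ x₁)) :=
      (hψcont.continuousAt).continuousWithinAt.tendsto
    refine ge_of_tendsto htend ?_
    filter_upwards [Ioo_mem_nhdsLT_of_mem ⟨hx₂x₁, le_refl x₁⟩] with t ht
    exact le_of_lt (hIco t ⟨le_of_lt ht.1, ht.2⟩)
  have hlow : ∀ t ∈ Icc x₂ x₁, M / 2 ≤ ψ t := by
    intro t ht
    rcases lt_or_eq_of_le ht.2 with h | h
    · exact le_of_lt (hIco t ⟨ht.1, h⟩)
    · rw [h, hψx₁]
  have hupp : ∀ t ∈ Icc x₂ x₁, ψ t ≤ M := by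
    intro t ht
    exact hmax ⟨le_trans (le_of_lt hx₂int.1) ht.1, le_trans ht.2 hx₁b⟩
  -- ψ' x₁ ≤ 0
  have hψ'x₁ : ψ' x₁ ≤ 0 := by
    have hslope : Tendsto (slope ψ x₁) (𝓝[<] x₁) (𝓝 (ψ' x₁)) :=
      (hasDerivAt_iff_tendsto_slope.mp (hd x₁)).mono_left
        (nhdsWithin_mono _ (fun y hy => ne_of_lt hy))
    refine le_of_tendsto hslope ?_
    filter_upwards [Ioo_mem_nhdsLT_of_mem ⟨hx₂x₁, le_refl x₁⟩] with t ht
    rw [slope_def_field]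
    have h1 : ψ x₁ ≤ ψ t := by rw [hψx₁]; exact le_of_lt (hIco t ⟨le_of_lt ht.1, ht.2⟩)
    have h2 : t - x₁ < 0 := by linarith [ht.2]
    exact div_nonpos_iff.mpr (Or.inl ⟨by linarith, le_of_lt h2⟩)
  set L : ℝ := x₁ - x₂ with hLdef
  have hL : 0 < L := by rw [hLdef]; linarith
  set μS := volume (Ioc x₂ x₁ ∩ S) with hμSdef
  have hμSfin : μS < ⊤ := lt_of_le_of_lt (measure_mono inter_subset_left) measure_Ioc_lt_top
  set s : ℝ := μS.toReal with hsdef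
  have hs0 : 0 ≤ s := ENNReal.toReal_nonneg
  have hFTC2 : ∀ t, ∫ u in x₂..t, ψ'' u = ψ' t - ψ' x₂ :=
    fun t => intervalIntegral.integral_eq_sub_of_hasDerivAt (fun u _ => hd' u)
      (hc.intervalIntegrable _ _)
  -- Step 1 : pointwise lower bound on ψ'
  have hstep1 : ∀ t ∈ Icc x₂ x₁, -(E * M * s) ≤ ψ' t := by
    intro t ht
    have hx₂t : x₂ ≤ t := ht.1
    have hind : IntervalIntegrable (S.indicator (fun _ => -(E * M)) : ℝ → ℝ) volume x₂ t :=
      ⟨(integrableOn_const measure_Ioc_lt_top.ne).indicator hSm,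
       (integrableOn_const measure_Ioc_lt_top.ne).indicator hSm⟩
    have key : ∫ u in x₂..t, (S.indicator (fun _ => -(E * M)) : ℝ → ℝ) u
        ≤ ∫ u in x₂..t, ψ'' u := by
      refine intervalIntegral.integral_mono_on hx₂t hind (hc.intervalIntegrable _ _) ?_
      intro u hu
      have huI : u ∈ Icc x₂ x₁ := ⟨hu.1, le_trans hu.2 ht.2⟩
      have h1 := hlow u huI
      have h2 := hupp u huI
      rw [hψ'' u]
      by_cases hu' : u ∈ S
      · rw [indicator_of_mem hu']
        have := hV0 u
        nlinarith
      · rw [indicator_of_notMem hu']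
        have hVα : α ≤ V u := not_lt.mp hu'
        nlinarith
    have hcomp : ∫ u in x₂..t, (S.indicator (fun _ => -(E * M)) : ℝ → ℝ) u
        = (volume (Ioc x₂ t ∩ S)).toReal * (-(E * M)) := by
      rw [intervalIntegral.integral_of_le hx₂t, setIntegral_indicator hSm, setIntegral_const,
        smul_eq_mul, measureReal_def]
    have hmono : (volume (Ioc x₂ t ∩ S)).toReal ≤ s := by
      rw [hsdef]
      exact ENNReal.toReal_mono hμSfin.ne
        (by rw [hμSdef]; exact measure_mono (inter_subset_inter_left _ (Ioc_subset_Ioc_right ht.2)))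
    have hEM : 0 ≤ E * M := mul_nonneg hE.le hM.le
    have hlb : -(E * M * s) ≤ (volume (Ioc x₂ t ∩ S)).toReal * (-(E * M)) := by
      nlinarith [mul_le_mul_of_nonneg_left hmono hEM,
        ENNReal.toReal_nonneg (a := volume (Ioc x₂ t ∩ S))]
    have hF := hFTC2 t
    rw [hψ'x₂] at hF
    linarith [hcomp ▸ hlb, hF ▸ key]
  -- integrate ψ' over [x₂, x₁]
  have hdrop : ∫ u in x₂..x₁, ψ' u = ψ x₁ - ψ x₂ :=
    intervalIntegral.integral_eq_sub_of_hasDerivAt (fun u _ => hd u)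
      (hψ'cont.intervalIntegrable _ _)
  have hlow2 : L * (-(E * M * s)) ≤ ψ x₁ - ψ x₂ := by
    rw [← hdrop]
    have h := intervalIntegral.integral_mono_on (le_of_lt hx₂x₁)
      (intervalIntegrable_const (μ := volume)) (hψ'cont.intervalIntegrable _ _) hstep1
    rwa [intervalIntegral.integral_const, smul_eq_mul, ← hLdef] at h
  have hA : 1 ≤ 2 * (E * s * L) := by
    have hdiff : ψ x₁ - ψ x₂ = -(M / 2) := by rw [hψx₁, ← hMdef]; ring
    rw [hdiff] at hlow2
    by_contra hcon
    push_neg at hcon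
    have hcon2 : M * (2 * (E * s * L)) < M * 1 := mul_lt_mul_of_pos_left hcon hM
    nlinarith [hlow2, hcon2]
  -- Step 2
  have hindI : IntegrableOn (S.indicator (fun _ => (α - E) * (M / 2) + E * M) : ℝ → ℝ)
      (Ioc x₂ x₁) volume :=
    (integrableOn_const measure_Ioc_lt_top.ne).indicator hSm
  have hindI' : IntegrableOn (S.indicator (fun _ => (α - E) * (M / 2) + E * M) : ℝ → ℝ)
      (Ioc x₁ x₂) volume :=
    (integrableOn_const measure_Ioc_lt_top.ne).indicator hSm
  have hind2 : IntervalIntegrable (S.indicator (fun _ => (α - E) * (M / 2) + E * M) : ℝ → ℝ)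
      volume x₂ x₁ := ⟨hindI, hindI'⟩
  have hstep2 : (α - E) * (M / 2) * L - ((α - E) * (M / 2) + E * M) * s ≤ 0 := by
    have key2 : ∫ u in x₂..x₁, ((α - E) * (M / 2)
          - (S.indicator (fun _ => (α - E) * (M / 2) + E * M) : ℝ → ℝ) u)
        ≤ ∫ u in x₂..x₁, ψ'' u := by
      refine intervalIntegral.integral_mono_on (le_of_lt hx₂x₁)
        ((intervalIntegrable_const (μ := volume)).sub hind2) (hc.intervalIntegrable _ _) ?_
      intro u hu
      have h1 := hlow u hu
      have h2 := hupp u hu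
      rw [hψ'' u]
      by_cases hu' : u ∈ S
      · rw [indicator_of_mem hu']
        have := hV0 u
        nlinarith
      · rw [indicator_of_notMem hu']
        have hVα : α ≤ V u := not_lt.mp hu'
        nlinarith
    have hLHS : ∫ u in x₂..x₁, ((α - E) * (M / 2)
          - (S.indicator (fun _ => (α - E) * (M / 2) + E * M) : ℝ → ℝ) u)
        = (α - E) * (M / 2) * L - ((α - E) * (M / 2) + E * M) * s := by
      rw [intervalIntegral.integral_sub (intervalIntegrable_const (μ := volume)) hind2,
        intervalIntegral.integral_const, smul_eq_mul, ← hLdef,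
        intervalIntegral.integral_of_le (le_of_lt hx₂x₁), setIntegral_indicator hSm,
        setIntegral_const, smul_eq_mul, measureReal_def, ← hμSdef, ← hsdef]
      ring
    have hval := hFTC2 x₁
    rw [hψ'x₂] at hval
    rw [hLHS] at key2
    linarith [hψ'x₁]
  clear_value μS s L M m T x₁
  -- combine
  have hB : (α - E) * L ≤ (α + E) * s := by nlinarith [hstep2, hM]
  have hEs2 : (1 - ε) / 4 ≤ E * s ^ 2 :=
    alg_step ε E s L α hε0 hε1 hE hs0 hαdef hαE hA hB
  -- take square roots
  have hsqrt : Real.sqrt (1 - ε) / 2 ≤ Real.sqrt E * s := by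
    have hq1 : Real.sqrt ((1 - ε) / 4) ≤ Real.sqrt (E * s ^ 2) := Real.sqrt_le_sqrt hEs2
    have hq2 : Real.sqrt ((1 - ε) / 4) = Real.sqrt (1 - ε) / 2 := by
      rw [show (1 - ε) / 4 = (1 - ε) * (1 / 2) ^ 2 by ring, Real.sqrt_mul (by linarith),
        Real.sqrt_sq (by norm_num)]
      ring
    have hq3 : Real.sqrt (E * s ^ 2) = Real.sqrt E * s := by
      rw [Real.sqrt_mul hE.le, Real.sqrt_sq hs0]
    rw [hq2, hq3] at hq1; exact hq1
  have hfinal : 4 / 27 * (1 - ε) ^ 3 * Real.pi ≤ Real.sqrt E * s :=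
    sqrt_final ε _ hε0 hε1 hsqrt
  calc ENNReal.ofReal (4 / 27 * (1 - ε) ^ 3 * Real.pi)
      ≤ ENNReal.ofReal (Real.sqrt E * s) := ENNReal.ofReal_le_ofReal hfinal
    _ = ENNReal.ofReal (Real.sqrt E) * ENNReal.ofReal s :=
        ENNReal.ofReal_mul (Real.sqrt_nonneg E)
    _ ≤ ENNReal.ofReal (Real.sqrt E) * volume S := by
        gcongr
        rw [hsdef, ENNReal.ofReal_toReal hμSfin.ne, hμSdef]
        exact measure_mono inter_subset_right

/-- Donoho–Stark lower bound for eigenvalues.  Let `V : ℝ → [0,∞)` be continuous and suppose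
`E > 0` is an eigenvalue of `−d²/dx² + V` on `ℝ`, i.e. there is a nonzero `ψ ∈ C²(ℝ) ∩ L²(ℝ)`
with `V·ψ ∈ L²(ℝ)` and `−ψ″ + Vψ = Eψ`.  Then for every `ε ∈ (0,1)`:
`√E·|{V < ε⁻²E}| ≥ (4/27)(1−ε)³π` (the left-hand side may be `+∞`). -/
theorem first_eigenvalue_bohr_sommerfeld
    (V : ℝ → ℝ) (hVc : Continuous V) (hV0 : ∀ x, 0 ≤ V x)
    (E : ℝ) (hE : 0 < E)
    (ψ ψ' ψ'' : ℝ → ℝ)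
    (hψne : ∃ x, ψ x ≠ 0)
    (hd : ∀ x : ℝ, HasDerivAt ψ (ψ' x) x)
    (hd' : ∀ x : ℝ, HasDerivAt ψ' (ψ'' x) x)
    (hc : Continuous ψ'')
    (hL2 : Integrable (fun x => ψ x ^ 2))
    (hVL2 : Integrable (fun x => (V x * ψ x) ^ 2))
    (heq : ∀ x : ℝ, -ψ'' x + V x * ψ x = E * ψ x) :
    ∀ ε : ℝ, 0 < ε → ε < 1 →
      ENNReal.ofReal (4 / 27 * (1 - ε) ^ 3 * Real.pi) ≤
        ENNReal.ofReal (Real.sqrt E) * volume {x : ℝ | V x < ε⁻¹ ^ 2 * E} := by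
  obtain ⟨x₀, hx₀⟩ := hψne
  rcases lt_or_gt_of_ne hx₀ with hneg | hpos
  · -- apply key_bound to -ψ
    refine key_bound V hVc hV0 E hE (fun y => -ψ y) (fun y => -ψ' y) (fun y => -ψ'' y)
      (fun x => (hd x).neg) (fun x => (hd' x).neg) hc.neg ?_ ?_ x₀ (by simpa using hneg)
    · simpa using hL2
    · intro x
      have := heq x
      ring_nf
      ring_nf at this
      linarith
  · exact key_bound V hVc hV0 E hE ψ ψ' ψ'' hd hd' hc hL2 heq x₀ hpos
end

section
/- Let V : ℝ → ℝ be continuous with moderate growth. Let E₁, E₂ ∈ ℝ and let φ₁, φ₂ ∈ C²(ℝ;ℝ) satisfy −φ_j″ + Vφ_j = E_jφ_j on ℝ, with φ_j, φ_j′, φ_j″ all of fast decay (j = 1,2). Let U ∈ C⁰(ℝ) ∩ C¹(ℝ∖{0}) be such that U′ is Lebesgue integrable on a neighbourhood of 0 and U and U′ have moderate growth. Then the integrals below are absolutely convergent and (E₂ − E₁) ∫_ℝ U φ₁ φ₂ = ∫_ℝ U′ (φ₁φ₂′ − φ₁′φ₂). -/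
open MeasureTheory

/-- `f` has moderate growth: `|f(x)| ≤ e^{M|x|}` for some `M, K > 0` and all `|x| ≥ K`. -/
def ModerateGrowth (f : ℝ → ℝ) : Prop :=
  ∃ M K : ℝ, 0 < M ∧ 0 < K ∧ ∀ x : ℝ, K ≤ |x| → |f x| ≤ Real.exp (M * |x|)

/-- `f` has fast decay: for every `M > 0` there is `K` with `|f(x)| ≤ e^{−M|x|}` for `|x| ≥ K`. -/
def FastDecay (f : ℝ → ℝ) : Prop :=
  ∀ M : ℝ, 0 < M → ∃ K : ℝ, ∀ x : ℝ, K ≤ |x| → |f x| ≤ Real.exp (-(M * |x|))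

section AuxCommutator
open Real Set Filter

lemma fd_mul {f g : ℝ → ℝ} (hf : FastDecay f) (hg : FastDecay g) :
    FastDecay (fun x => f x * g x) := by
  intro M hM
  obtain ⟨K₁, h₁⟩ := hf M hM
  obtain ⟨K₂, h₂⟩ := hg 1 one_pos
  refine ⟨max K₁ K₂, fun x hx => ?_⟩
  have hx₁ := h₁ x (le_trans (le_max_left _ _) hx)
  have hx₂ := h₂ x (le_trans (le_max_right _ _) hx)
  have hg1 : |g x| ≤ 1 := hx₂.trans (by
    simpa using Real.exp_le_one_iff.mpr (by simpa using abs_nonneg x))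
  calc |f x * g x| = |f x| * |g x| := abs_mul _ _
    _ ≤ Real.exp (-(M * |x|)) * 1 := by
        exact mul_le_mul hx₁ hg1 (abs_nonneg _) (Real.exp_pos _).le
    _ = Real.exp (-(M * |x|)) := mul_one _

lemma fd_sub {f g : ℝ → ℝ} (hf : FastDecay f) (hg : FastDecay g) :
    FastDecay (fun x => f x - g x) := by
  intro M hM
  obtain ⟨K₁, h₁⟩ := hf (M + 1) (by linarith)
  obtain ⟨K₂, h₂⟩ := hg (M + 1) (by linarith)
  refine ⟨max (Real.log 2) (max K₁ K₂), fun x hx => ?_⟩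
  have hx₁ := h₁ x (le_trans (le_trans (le_max_left _ _) (le_max_right _ _)) hx)
  have hx₂ := h₂ x (le_trans (le_trans (le_max_right _ _) (le_max_right _ _)) hx)
  have h2 : (2 : ℝ) ≤ Real.exp |x| := by
    rw [show (2:ℝ) = Real.exp (Real.log 2) from (Real.exp_log two_pos).symm]
    exact Real.exp_le_exp.2 (le_trans (le_max_left _ _) hx)
  have key : 2 * Real.exp (-((M+1) * |x|)) ≤ Real.exp (-(M * |x|)) := by
    have : Real.exp (-((M+1) * |x|)) = Real.exp (-(M * |x|)) * (Real.exp |x|)⁻¹ := by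
      rw [← Real.exp_neg, ← Real.exp_add]; ring_nf
    rw [this]
    rw [mul_comm 2, mul_assoc]
    have hle : 2 * (Real.exp |x|)⁻¹ ≤ 1 := by
      rw [mul_inv_le_iff₀ (Real.exp_pos _)]; linarith
    nlinarith [Real.exp_pos (-(M * |x|)), Real.exp_pos |x|]
  calc |f x - g x| ≤ |f x| + |g x| := abs_sub _ _
    _ ≤ 2 * Real.exp (-((M+1) * |x|)) := by linarith
    _ ≤ Real.exp (-(M * |x|)) := key

lemma fd_bound {f : ℝ → ℝ} (hf : FastDecay f) (hc : Continuous f) :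
    ∃ C : ℝ, ∀ x, |f x| ≤ C := by
  obtain ⟨K, hK⟩ := hf 1 one_pos
  set R := max K 0 with hR
  obtain ⟨C, hC⟩ := (isCompact_Icc (a := -R) (b := R)).exists_bound_of_continuousOn
    hc.continuousOn
  refine ⟨max C 1, fun x => ?_⟩
  rcases le_or_gt |x| R with h | h
  · have := hC x (abs_le.mp h)
    simpa [Real.norm_eq_abs] using this.trans (le_max_left _ _)
  · have := hK x (le_trans (le_max_left _ _) h.le)
    refine this.trans (le_trans ?_ (le_max_right _ _))
    simpa using Real.exp_le_one_iff.mpr (by simpa using abs_nonneg x)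

lemma tail_bound {g h : ℝ → ℝ} (hg : ModerateGrowth g) (hh : FastDecay h) :
    ∃ R : ℝ, 0 < R ∧ ∀ x : ℝ, R ≤ |x| → |g x * h x| ≤ Real.exp (-|x|) := by
  obtain ⟨M, K, hM, hK, hgb⟩ := hg
  obtain ⟨K', hK'⟩ := hh (M + 1) (by linarith)
  refine ⟨max K (max K' 1), lt_of_lt_of_le hK (le_max_left _ _), fun x hx => ?_⟩
  have h₁ := hgb x (le_trans (le_max_left _ _) hx)
  have h₂ := hK' x (le_trans (le_trans (le_max_left _ _) (le_max_right _ _)) hx)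
  calc |g x * h x| = |g x| * |h x| := abs_mul _ _
    _ ≤ Real.exp (M * |x|) * Real.exp (-((M+1) * |x|)) :=
        mul_le_mul h₁ h₂ (abs_nonneg _) (Real.exp_pos _).le
    _ = Real.exp (-|x|) := by rw [← Real.exp_add]; ring_nf

lemma exp_integrableOn_Iio (a : ℝ) : IntegrableOn (fun x : ℝ => Real.exp x) (Iio a) := by
  have h : IntegrableOn (fun x : ℝ => Real.exp (-1 * x)) (Ioi (-a)) :=
    exp_neg_integrableOn_Ioi _ one_pos
  have h2 : Integrable ((Ioi (-a)).indicator (fun x => Real.exp (-1 * x))) :=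
    (integrable_indicator_iff measurableSet_Ioi).2 h
  have h3 := h2.comp_neg
  have heq : (fun x => ((Ioi (-a)).indicator (fun y => Real.exp (-1 * y))) (-x))
      = (Iio a).indicator (fun x : ℝ => Real.exp x) := by
    funext x
    by_cases hx : x < a
    · rw [Set.indicator_of_mem (by simpa using hx),
        Set.indicator_of_mem (show x ∈ Iio a from hx)]
      ring_nf
    · rw [Set.indicator_of_notMem (by simpa using hx),
        Set.indicator_of_notMem (by simpa using hx)]
  rw [heq] at h3
  exact (integrable_indicator_iff measurableSet_Iio).1 h3

lemma key_integrable {f : ℝ → ℝ} (hm : AEStronglyMeasurable f volume)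
    (hloc : ∀ R : ℝ, IntegrableOn f (Icc (-R) R))
    (htail : ∃ R : ℝ, 0 < R ∧ ∀ x : ℝ, R ≤ |x| → |f x| ≤ Real.exp (-|x|)) :
    Integrable f := by
  obtain ⟨R, hR, hbd⟩ := htail
  have hIoi : IntegrableOn f (Ioi R) := by
    refine Integrable.mono' (exp_neg_integrableOn_Ioi R one_pos) hm.restrict ?_
    refine (ae_restrict_iff' measurableSet_Ioi).2 (ae_of_all _ fun x hx => ?_)
    have hx0 : 0 < x := lt_trans hR hx
    have := hbd x (by rw [abs_of_pos hx0]; exact (le_of_lt hx))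
    rw [abs_of_pos hx0] at this
    simpa [Real.norm_eq_abs] using this
  have hIio : IntegrableOn f (Iio (-R)) := by
    refine Integrable.mono' (exp_integrableOn_Iio (-R)) hm.restrict ?_
    refine (ae_restrict_iff' measurableSet_Iio).2 (ae_of_all _ fun x hx => ?_)
    have hx' : x < -R := hx
    have hx0 : x < 0 := lt_trans hx' (by linarith)
    have := hbd x (by rw [abs_of_neg hx0]; linarith)
    rw [abs_of_neg hx0] at this
    simpa [Real.norm_eq_abs] using this
  rw [← integrableOn_univ]
  have hsub : (univ : Set ℝ) ⊆ Iio (-R) ∪ (Icc (-R) R ∪ Ioi R) := by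
    intro x _
    rcases lt_or_ge x (-R) with h | h
    · exact Or.inl h
    · rcases le_or_gt x R with h' | h'
      · exact Or.inr (Or.inl ⟨h, h'⟩)
      · exact Or.inr (Or.inr h')
  exact ((hIio.union ((hloc R).union hIoi)).mono_set hsub)

lemma key_tendsto_top {f : ℝ → ℝ}
    (htail : ∃ R : ℝ, 0 < R ∧ ∀ x : ℝ, R ≤ |x| → |f x| ≤ Real.exp (-|x|)) :
    Tendsto f atTop (nhds 0) := by
  obtain ⟨R, hR, hbd⟩ := htail
  refine squeeze_zero_norm' ?_ (Real.tendsto_exp_neg_atTop_nhds_zero)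
  filter_upwards [eventually_ge_atTop R] with x hx
  have hx0 : 0 < x := lt_of_lt_of_le hR hx
  have := hbd x (by rw [abs_of_pos hx0]; exact hx)
  rw [abs_of_pos hx0] at this
  simpa [Real.norm_eq_abs] using this

lemma key_tendsto_bot {f : ℝ → ℝ}
    (htail : ∃ R : ℝ, 0 < R ∧ ∀ x : ℝ, R ≤ |x| → |f x| ≤ Real.exp (-|x|)) :
    Tendsto f atBot (nhds 0) := by
  obtain ⟨R, hR, hbd⟩ := htail
  have hexp : Tendsto (fun x : ℝ => Real.exp x) atBot (nhds 0) := Real.tendsto_exp_atBot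
  refine squeeze_zero_norm' ?_ hexp
  filter_upwards [eventually_le_atBot (-R)] with x hx
  have hx0 : x < 0 := lt_of_le_of_lt hx (by linarith)
  have := hbd x (by rw [abs_of_neg hx0]; linarith)
  rw [abs_of_neg hx0] at this
  simpa [Real.norm_eq_abs] using this

/-- Commutator identity.  Let `V : ℝ → ℝ` be continuous of moderate growth, let
`φ₁, φ₂ ∈ C²(ℝ)` satisfy `−φ_j″ + Vφ_j = E_jφ_j` with `φ_j, φ_j′, φ_j″` of fast decay, and let
`U ∈ C⁰(ℝ) ∩ C¹(ℝ∖{0})` with `U′` integrable near `0` and `U, U′` of moderate growth.  Then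
the integrals below converge absolutely and
`(E₂ − E₁)∫ U φ₁φ₂ = ∫ U′(φ₁φ₂′ − φ₁′φ₂)`. -/
theorem commutator_identity
    (V : ℝ → ℝ) (hVc : Continuous V) (hVg : ModerateGrowth V)
    (E₁ E₂ : ℝ) (φ₁ φ₁' φ₁'' φ₂ φ₂' φ₂'' : ℝ → ℝ)
    (h₁d : ∀ x : ℝ, HasDerivAt φ₁ (φ₁' x) x)
    (h₁d' : ∀ x : ℝ, HasDerivAt φ₁' (φ₁'' x) x)
    (h₁c : Continuous φ₁'')
    (h₁eq : ∀ x : ℝ, -φ₁'' x + V x * φ₁ x = E₁ * φ₁ x)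
    (h₁f : FastDecay φ₁) (h₁f' : FastDecay φ₁') (h₁f'' : FastDecay φ₁'')
    (h₂d : ∀ x : ℝ, HasDerivAt φ₂ (φ₂' x) x)
    (h₂d' : ∀ x : ℝ, HasDerivAt φ₂' (φ₂'' x) x)
    (h₂c : Continuous φ₂'')
    (h₂eq : ∀ x : ℝ, -φ₂'' x + V x * φ₂ x = E₂ * φ₂ x)
    (h₂f : FastDecay φ₂) (h₂f' : FastDecay φ₂') (h₂f'' : FastDecay φ₂'')
    (U U' : ℝ → ℝ) (hUc : Continuous U)
    (hU'd : ∀ x : ℝ, x ≠ 0 → HasDerivAt U (U' x) x)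
    (hU'c : ContinuousOn U' {(0 : ℝ)}ᶜ)
    (hU'int : ∃ ε : ℝ, 0 < ε ∧ IntegrableOn U' (Set.Ioo (-ε) ε))
    (hUg : ModerateGrowth U) (hU'g : ModerateGrowth U') :
    Integrable (fun x => U x * φ₁ x * φ₂ x) ∧
    Integrable (fun x => U' x * (φ₁ x * φ₂' x - φ₁' x * φ₂ x)) ∧
    (E₂ - E₁) * ∫ x : ℝ, U x * φ₁ x * φ₂ x =
      ∫ x : ℝ, U' x * (φ₁ x * φ₂' x - φ₁' x * φ₂ x) := by

  -- continuity facts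
  have hφ₁c : Continuous φ₁ := continuous_iff_continuousAt.2 fun x => (h₁d x).continuousAt
  have hφ₁'c : Continuous φ₁' := continuous_iff_continuousAt.2 fun x => (h₁d' x).continuousAt
  have hφ₂c : Continuous φ₂ := continuous_iff_continuousAt.2 fun x => (h₂d x).continuousAt
  have hφ₂'c : Continuous φ₂' := continuous_iff_continuousAt.2 fun x => (h₂d' x).continuousAt
  -- the Wronskian-type function
  set W : ℝ → ℝ := fun x => φ₁ x * φ₂' x - φ₁' x * φ₂ x with hWdef
  have hWc : Continuous W := ((hφ₁c.mul hφ₂'c).sub (hφ₁'c.mul hφ₂c))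
  have hWfd : FastDecay W := fd_sub (fd_mul h₁f h₂f') (fd_mul h₁f' h₂f)
  have hPfd : FastDecay (fun x => φ₁ x * φ₂ x) := fd_mul h₁f h₂f
  -- measurability of U'
  have hU'm : AEStronglyMeasurable U' volume :=
    (measurable_of_continuousOn_compl_singleton 0 hU'c).aestronglyMeasurable
  -- Integrability of U·φ₁·φ₂
  have Int1 : Integrable (fun x => U x * φ₁ x * φ₂ x) := by
    refine key_integrable ((hUc.mul hφ₁c).mul hφ₂c).aestronglyMeasurable
      (fun R => ((hUc.mul hφ₁c).mul hφ₂c).integrableOn_Icc) ?_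
    obtain ⟨R, hR, hbd⟩ := tail_bound hUg hPfd
    exact ⟨R, hR, fun x hx => by simpa [mul_assoc] using hbd x hx⟩
  -- Integrability of U'·W
  obtain ⟨C, hC⟩ := fd_bound hWfd hWc
  obtain ⟨ε, hε, hεint⟩ := hU'int
  have mulW : ∀ s : Set ℝ, IntegrableOn U' s → IntegrableOn (fun x => U' x * W x) s := by
    intro s hs
    have hb : Integrable (fun x => W x * U' x) (volume.restrict s) :=
      hs.bdd_mul hWc.aestronglyMeasurable.restrict
        (ae_of_all _ fun x => by simpa [Real.norm_eq_abs] using hC x)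
    exact hb.congr (ae_of_all _ fun x => mul_comm _ _)
  have hU'loc : ∀ R : ℝ, IntegrableOn U' (Icc (-R) R) := by
    intro R
    have h₂' : IntegrableOn U' (Icc (ε/2) R) := by
      refine (hU'c.mono ?_).integrableOn_compact isCompact_Icc
      intro x hx
      have : (0:ℝ) < x := lt_of_lt_of_le (by linarith) hx.1
      simpa using this.ne'
    have h₃ : IntegrableOn U' (Icc (-R) (-(ε/2))) := by
      refine (hU'c.mono ?_).integrableOn_compact isCompact_Icc
      intro x hx
      have : x < (0:ℝ) := lt_of_le_of_lt hx.2 (by linarith)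
      simpa using this.ne
    have hsub : Icc (-R) R ⊆ Ioo (-ε) ε ∪ (Icc (ε/2) R ∪ Icc (-R) (-(ε/2))) := by
      intro x hx
      rcases lt_or_ge x ε with h1 | h1
      · rcases lt_or_ge (-ε) x with h2 | h2
        · exact Or.inl ⟨h2, h1⟩
        · exact Or.inr (Or.inr ⟨hx.1, by linarith⟩)
      · exact Or.inr (Or.inl ⟨by linarith, hx.2⟩)
    exact (hεint.union (h₂'.union h₃)).mono_set hsub
  have Int2 : Integrable (fun x => U' x * W x) := by
    refine key_integrable (hU'm.mul hWc.aestronglyMeasurable)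
      (fun R => mulW _ (hU'loc R)) (tail_bound hU'g hWfd)
  -- derivative of W
  have hW' : ∀ x : ℝ, HasDerivAt W ((E₁ - E₂) * (φ₁ x * φ₂ x)) x := by
    intro x
    have h := ((h₁d x).mul (h₂d' x)).sub ((h₁d' x).mul (h₂d x))
    refine h.congr_deriv (Eq.symm ?_)
    linear_combination φ₁ x * h₂eq x - φ₂ x * h₁eq x
  -- the function for FTC
  set F : ℝ → ℝ := fun x => U x * W x with hFdef
  set G : ℝ → ℝ := fun x => U' x * W x + U x * ((E₁ - E₂) * (φ₁ x * φ₂ x)) with hGdef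
  have IntX : Integrable (fun x => U x * ((E₁ - E₂) * (φ₁ x * φ₂ x))) := by
    have := Int1.const_mul (E₁ - E₂)
    exact this.congr (ae_of_all _ fun x => by ring)
  have IntG : Integrable G := Int2.add IntX
  have hFd : ∀ x : ℝ, x ≠ 0 → HasDerivAt F (G x) x := by
    intro x hx
    exact (hU'd x hx).mul (hW' x)
  have hFcont : ContinuousWithinAt F (Ici (0:ℝ)) 0 :=
    (hUc.mul hWc).continuousWithinAt
  have hFcont' : ContinuousWithinAt F (Iic (0:ℝ)) 0 :=
    (hUc.mul hWc).continuousWithinAt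
  have htailF := tail_bound hUg hWfd
  have hFtop : Tendsto F atTop (nhds 0) := key_tendsto_top htailF
  have hFbot : Tendsto F atBot (nhds 0) := key_tendsto_bot htailF
  have h_top : ∫ x in Ioi (0:ℝ), G x = 0 - F 0 :=
    integral_Ioi_of_hasDerivAt_of_tendsto hFcont
      (fun x hx => hFd x (ne_of_gt hx)) IntG.integrableOn hFtop
  have h_bot : ∫ x in Iic (0:ℝ), G x = F 0 - 0 :=
    integral_Iic_of_hasDerivAt_of_tendsto hFcont'
      (fun x hx => hFd x (ne_of_lt hx)) IntG.integrableOn hFbot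
  have htotal : ∫ x : ℝ, G x = 0 := by
    rw [← intervalIntegral.integral_Iic_add_Ioi IntG.integrableOn IntG.integrableOn, h_top, h_bot]; ring
  rw [hGdef] at htotal
  rw [integral_add Int2 IntX] at htotal
  have hX : ∫ x : ℝ, U x * ((E₁ - E₂) * (φ₁ x * φ₂ x)) =
      (E₁ - E₂) * ∫ x : ℝ, U x * φ₁ x * φ₂ x := by
    rw [show (fun x => U x * ((E₁ - E₂) * (φ₁ x * φ₂ x)))
        = fun x => (E₁ - E₂) * (U x * φ₁ x * φ₂ x) from funext fun x => by ring]
    exact integral_const_mul _ _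
  rw [hX] at htotal
  exact ⟨Int1, Int2, by linarith⟩

end AuxCommutator
end

section
/- Let V : ℝ → ℝ be continuous on ℝ and C¹ on ℝ∖{0}, let E ∈ ℝ, and let ψ ∈ C²(ℝ;ℝ) satisfy −ψ″ + Vψ = Eψ on ℝ. Assume ψ ∈ L²(ℝ), ψ′ ∈ L²(ℝ), V·ψ² is Lebesgue integrable on ℝ, the function x ↦ x·V′(x)·ψ(x)² is Lebesgue integrable on ℝ∖{0}, and x·(ψ(x)² + ψ′(x)² + V(x)ψ(x)²) → 0 as x → ±∞. Then ∫_ℝ x V′(x) ψ(x)² dx = 2 ∫_ℝ ψ′(x)² dx. -/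
open MeasureTheory Filter
open Set

private lemma aux_limit_zero_atTop (g : ℝ → ℝ) (hg : Integrable g) {L : ℝ}
    (h : Tendsto (fun x => x * g x) atTop (nhds L)) : L = 0 := by
  by_contra hL
  have hLpos : 0 < |L| := abs_pos.2 hL
  have habs : Tendsto (fun x => |x * g x|) atTop (nhds |L|) := h.abs
  have hev : ∀ᶠ x in atTop, |L| / 2 < |x * g x| :=
    habs.eventually (eventually_gt_nhds (by linarith))
  obtain ⟨a, ha⟩ := eventually_atTop.1 hev
  have key : IntegrableOn (fun x : ℝ => x⁻¹) (Ioi (max a 1)) := by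
    have h1 : Integrable (fun x => (2 / |L|) * |g x|) := (hg.abs.const_mul _)
    refine Integrable.mono' h1.integrableOn (measurable_inv.aestronglyMeasurable) ?_
    rw [ae_restrict_iff' measurableSet_Ioi]
    refine Eventually.of_forall fun x hx => ?_
    have hx1 : (1 : ℝ) < x := lt_of_le_of_lt (le_max_right a 1) hx
    have hx0 : (0 : ℝ) < x := by linarith
    have hxa : a ≤ x := le_of_lt (lt_of_le_of_lt (le_max_left a 1) hx)
    have h2 : |L| / 2 < x * |g x| := by
      have := ha x hxa
      rwa [abs_mul, abs_of_pos hx0] at this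
    rw [norm_inv, Real.norm_eq_abs, abs_of_pos hx0, inv_le_iff_one_le_mul₀ hx0,
      div_mul_eq_mul_div, div_mul_eq_mul_div, one_le_div hLpos]
    nlinarith [abs_nonneg (g x)]
  exact not_IntegrableOn_Ioi_inv key

private lemma aux_limit_zero_atBot (g : ℝ → ℝ) (hg : Integrable g) {L : ℝ}
    (h : Tendsto (fun x => x * g x) atBot (nhds L)) : L = 0 := by
  have hgneg : Integrable (fun x => g (-x)) := by
    have := hg.comp_neg
    simpa using this
  have h2 : Tendsto (fun x => x * g (-x)) atTop (nhds (-L)) := by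
    have h3 : Tendsto (fun x : ℝ => (-x) * g (-x)) atTop (nhds L) :=
      h.comp tendsto_neg_atTop_atBot
    have := h3.neg
    rw [show (fun x : ℝ => -((-x) * g (-x))) = fun x => x * g (-x) from funext fun x => by ring]
      at this
    exact this
  have := aux_limit_zero_atTop _ hgneg h2
  linarith


/-- Virial identity.  Let `V : ℝ → ℝ` be continuous, `C¹` off the origin with derivative `V′`,
`E ∈ ℝ`, and let `ψ ∈ C²(ℝ)` satisfy `−ψ″ + Vψ = Eψ` on `ℝ`.  Assume `ψ, ψ′ ∈ L²(ℝ)`,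
`Vψ²` is integrable on `ℝ`, `x·V′(x)·ψ(x)²` is integrable on `ℝ∖{0}`, and
`x·(ψ(x)² + ψ′(x)² + V(x)ψ(x)²) → 0` as `x → ±∞`.  Then
`∫ xV′(x)ψ(x)²dx = 2∫ ψ′(x)²dx`. -/
theorem virial_identity
    (V V' : ℝ → ℝ) (hVc : Continuous V)
    (hV'd : ∀ x : ℝ, x ≠ 0 → HasDerivAt V (V' x) x)
    (hV'c : ContinuousOn V' {(0 : ℝ)}ᶜ)
    (E : ℝ) (ψ ψ' ψ'' : ℝ → ℝ)
    (hd : ∀ x : ℝ, HasDerivAt ψ (ψ' x) x)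
    (hd' : ∀ x : ℝ, HasDerivAt ψ' (ψ'' x) x)
    (hc : Continuous ψ'')
    (heq : ∀ x : ℝ, -ψ'' x + V x * ψ x = E * ψ x)
    (hL2 : Integrable (fun x => ψ x ^ 2))
    (hL2' : Integrable (fun x => ψ' x ^ 2))
    (hVψ : Integrable (fun x => V x * ψ x ^ 2))
    (hxV' : IntegrableOn (fun x => x * V' x * ψ x ^ 2) {(0 : ℝ)}ᶜ)
    (hdecay_top : Tendsto (fun x => x * (ψ x ^ 2 + ψ' x ^ 2 + V x * ψ x ^ 2)) atTop (nhds 0))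
    (hdecay_bot : Tendsto (fun x => x * (ψ x ^ 2 + ψ' x ^ 2 + V x * ψ x ^ 2)) atBot (nhds 0)) :
    (∫ x in {(0 : ℝ)}ᶜ, x * V' x * ψ x ^ 2) = 2 * ∫ x : ℝ, ψ' x ^ 2 := by
  have hψ'' : ∀ x, ψ'' x = (V x - E) * ψ x := fun x => by linarith [heq x]
  have hψc : Continuous ψ := continuous_iff_continuousAt.2 fun x => (hd x).continuousAt
  have hψ'c : Continuous ψ' := continuous_iff_continuousAt.2 fun x => (hd' x).continuousAt
  -- The key auxiliary function and its derivative
  set Φ : ℝ → ℝ := fun x => x * (ψ' x ^ 2 - (V x - E) * ψ x ^ 2) + ψ x * ψ' x with hΦdef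
  set Φ' : ℝ → ℝ := fun x => 2 * ψ' x ^ 2 - x * V' x * ψ x ^ 2 with hΦ'def
  have hΦc : Continuous Φ := by
    rw [hΦdef]
    continuity
  have hΦd : ∀ x : ℝ, x ≠ 0 → HasDerivAt Φ (Φ' x) x := by
    intro x hx
    have h1 : HasDerivAt (fun y => ψ' y ^ 2) ((2 : ℕ) * ψ' x ^ 1 * ψ'' x) x := (hd' x).pow 2
    have h2 : HasDerivAt (fun y => (V y - E) * ψ y ^ 2)
        (V' x * ψ x ^ 2 + (V x - E) * ((2 : ℕ) * ψ x ^ 1 * ψ' x)) x :=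
      ((hV'd x hx).sub_const E).mul ((hd x).pow 2)
    have h3 := h1.sub h2
    have h4 := (hasDerivAt_id x).mul h3
    have h5 := (hd x).mul (hd' x)
    have h6 := h4.add h5
    convert h6 using 1
    · rfl
    · rfl
    · rfl
    rw [hψ'' x]
    simp only [id_eq, Pi.sub_apply, hΦ'def]
    push_cast
    ring
  -- integrability of Φ'
  have hIoi_sub : (Ioi (0:ℝ)) ⊆ {(0:ℝ)}ᶜ := fun x hx => ne_of_gt hx
  have hIio_sub : (Iio (0:ℝ)) ⊆ {(0:ℝ)}ᶜ := fun x hx => ne_of_lt hx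
  have hint_Ioi : IntegrableOn Φ' (Ioi 0) :=
    ((hL2'.const_mul 2).integrableOn).sub (hxV'.mono_set hIoi_sub)
  have hint_Iic : IntegrableOn Φ' (Iic 0) := by
    have h1 : IntegrableOn Φ' (Iio 0) :=
      ((hL2'.const_mul 2).integrableOn).sub (hxV'.mono_set hIio_sub)
    exact h1.congr_set_ae Iio_ae_eq_Iic.symm
  -- ψ ψ' tends to zero at ±∞
  have hu : ∀ x, HasDerivAt (fun y => ψ y * ψ' y) (ψ' x ^ 2 + (V x - E) * ψ x ^ 2) x := by
    intro x
    have := (hd x).mul (hd' x)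
    convert this using 1
    · rfl
    · rfl
    · rfl
    rw [hψ'' x]
    ring
  have huint : Integrable (fun x => ψ x * ψ' x) := by
    refine (hL2.add hL2').mono' ((hψc.mul hψ'c).aestronglyMeasurable) ?_
    refine Eventually.of_forall fun x => ?_
    rw [Real.norm_eq_abs, abs_mul]
    simp only [Pi.add_apply]
    nlinarith [sq_nonneg (|ψ x| - |ψ' x|), sq_abs (ψ x), sq_abs (ψ' x),
      abs_nonneg (ψ x), abs_nonneg (ψ' x)]
  have hu'int : Integrable (fun x => ψ' x ^ 2 + (V x - E) * ψ x ^ 2) := by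
    have := hL2'.add (hVψ.sub (hL2.const_mul E))
    exact this.congr (Eventually.of_forall fun x => by
      simp only [Pi.add_apply, Pi.sub_apply]; ring)
  have hu_top : Tendsto (fun x => ψ x * ψ' x) atTop (nhds 0) :=
    tendsto_zero_of_hasDerivAt_of_integrableOn_Ioi (a := 0) (fun x _ => hu x)
      hu'int.integrableOn huint.integrableOn
  have hu_bot : Tendsto (fun x => ψ x * ψ' x) atBot (nhds 0) :=
    tendsto_zero_of_hasDerivAt_of_integrableOn_Iic (a := 0) (fun x _ => hu x)
      hu'int.integrableOn huint.integrableOn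
  -- the auxiliary combination g
  have hgint : Integrable (fun x => 2 * ψ' x ^ 2 + (1 + E) * ψ x ^ 2) :=
    (hL2'.const_mul 2).add (hL2.const_mul (1 + E))
  -- Φ tends to 0 at +∞
  have hΦ_top : Tendsto Φ atTop (nhds 0) := by
    have h1 : Tendsto Φ atTop (nhds (limUnder atTop Φ)) :=
      tendsto_limUnder_of_hasDerivAt_of_integrableOn_Ioi (a := 0)
        (fun x hx => hΦd x (ne_of_gt hx)) hint_Ioi
    have h2 : Tendsto (fun x => x * (2 * ψ' x ^ 2 + (1 + E) * ψ x ^ 2)) atTop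
        (nhds (limUnder atTop Φ + 0 - 0)) := by
      refine ((h1.add hdecay_top).sub hu_top).congr fun x => ?_
      rw [hΦdef]
      ring
    have h3 := aux_limit_zero_atTop _ hgint h2
    rw [add_zero, sub_zero] at h3
    rwa [h3] at h1
  -- Φ tends to 0 at -∞
  have hΦ_bot : Tendsto Φ atBot (nhds 0) := by
    have h1 : Tendsto Φ atBot (nhds (limUnder atBot Φ)) :=
      tendsto_limUnder_of_hasDerivAt_of_integrableOn_Iic (a := -1)
        (fun x hx => hΦd x (by intro h; rw [h] at hx; simp at hx; linarith))
        (hint_Iic.mono_set (Iic_subset_Iic.2 (by norm_num)))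
    have h2 : Tendsto (fun x => x * (2 * ψ' x ^ 2 + (1 + E) * ψ x ^ 2)) atBot
        (nhds (limUnder atBot Φ + 0 - 0)) := by
      refine ((h1.add hdecay_bot).sub hu_bot).congr fun x => ?_
      rw [hΦdef]
      ring
    have h3 := aux_limit_zero_atBot _ hgint h2
    rw [add_zero, sub_zero] at h3
    rwa [h3] at h1
  -- FTC on the two half lines
  have hIoi : ∫ x in Ioi 0, Φ' x = 0 - Φ 0 :=
    integral_Ioi_of_hasDerivAt_of_tendsto (hΦc.continuousWithinAt)
      (fun x hx => hΦd x (ne_of_gt hx)) hint_Ioi hΦ_top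
  have hIic : ∫ x in Iic 0, Φ' x = Φ 0 - 0 :=
    integral_Iic_of_hasDerivAt_of_tendsto (hΦc.continuousWithinAt)
      (fun x hx => hΦd x (ne_of_lt hx)) hint_Iic hΦ_bot
  -- full-line integrability
  have hae : ({(0:ℝ)}ᶜ : Set ℝ) =ᵐ[volume] (univ : Set ℝ) := by
    rw [ae_eq_univ, compl_compl]
    exact measure_singleton 0
  have hxV'full : Integrable (fun x => x * V' x * ψ x ^ 2) := by
    rw [← integrableOn_univ]
    exact hxV'.congr_set_ae hae.symm
  have hΦ'full : Integrable Φ' := (hL2'.const_mul 2).sub hxV'full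
  have hsplit : ∫ x, Φ' x = (∫ x in Iic 0, Φ' x) + ∫ x in Ioi 0, Φ' x := by
    rw [← setIntegral_union (Iic_disjoint_Ioi le_rfl) measurableSet_Ioi hint_Iic hint_Ioi,
      Iic_union_Ioi, setIntegral_univ]
  have hΦ'zero : ∫ x, Φ' x = 0 := by rw [hsplit, hIic, hIoi]; ring
  -- final computation
  calc (∫ x in {(0:ℝ)}ᶜ, x * V' x * ψ x ^ 2)
      = ∫ x, x * V' x * ψ x ^ 2 := by
        rw [setIntegral_congr_set hae, setIntegral_univ]
    _ = ∫ x, (2 * ψ' x ^ 2 - Φ' x) := by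
        refine integral_congr_ae (Eventually.of_forall fun x => ?_)
        rw [hΦ'def]
        ring
    _ = (∫ x, 2 * ψ' x ^ 2) - ∫ x, Φ' x := integral_sub (hL2'.const_mul 2) hΦ'full
    _ = 2 * ∫ x : ℝ, ψ' x ^ 2 := by rw [hΦ'zero, integral_const_mul, sub_zero]
end
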